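/- arXiv:2211.05345 — 11 statements merged into one kernel-verified Lean document; each statement's English description precedes it below -/
import Mathlib

section
/- Let E ⊆ ℝ × ℝ be a finite irreflexive relation (a finite directed graph on real-number vertices with no self-loops, so (u,v) ∈ E implies u ≠ v). For each (u,v) ∈ E define three subsets of ℝ³: L₁(u,v) = {u} × {v} × ℝ, L₂(u,v) = ℝ × {u} × {v}, and L₃(u,v) = {v} × ℝ × {u}. Let S be the family of all sets L₁(u,v), L₂(u,v), L₃(u,v) over all (u,v) ∈ E. Then there exist three pairwise distinct members of S that pairwise intersect (each two of the three sets have a common point) if and only if there exist pairwise distinct u, v, w with (u,v) ∈ E, (v,w) ∈ E, and (w,u) ∈ E. -/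
/-- The axis-parallel line `{u} × {v} × ℝ` in `ℝ³`. -/
def L1 (u v : ℝ) : Set (ℝ × ℝ × ℝ) := {p | p.1 = u ∧ p.2.1 = v}

/-- The axis-parallel line `ℝ × {u} × {v}` in `ℝ³`. -/
def L2 (u v : ℝ) : Set (ℝ × ℝ × ℝ) := {p | p.2.1 = u ∧ p.2.2 = v}

/-- The axis-parallel line `{v} × ℝ × {u}` in `ℝ³`. -/
def L3 (u v : ℝ) : Set (ℝ × ℝ × ℝ) := {p | p.1 = v ∧ p.2.2 = u}

/-- The family of all lines `L1 (u,v)`, `L2 (u,v)`, `L3 (u,v)` over edges `(u,v) ∈ E`. -/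
def lineFamily (E : Set (ℝ × ℝ)) : Set (Set (ℝ × ℝ × ℝ)) :=
  {s | ∃ u v : ℝ, (u, v) ∈ E ∧ (s = L1 u v ∨ s = L2 u v ∨ s = L3 u v)}

lemma nsymm {s t : Set (ℝ × ℝ × ℝ)} (h : (s ∩ t).Nonempty) : (t ∩ s).Nonempty := by
  obtain ⟨p, h1, h2⟩ := h; exact ⟨p, h2, h1⟩

lemma L1_ne_L2 (u v a b : ℝ) : L1 u v ≠ L2 a b := by
  intro h
  have h1 : ((u, v, b + 1) : ℝ × ℝ × ℝ) ∈ L1 u v := ⟨rfl, rfl⟩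
  rw [h] at h1
  have := h1.2
  simp only [L2] at this
  linarith

lemma L1_ne_L3 (u v a b : ℝ) : L1 u v ≠ L3 a b := by
  intro h
  have h1 : ((u, v, a + 1) : ℝ × ℝ × ℝ) ∈ L1 u v := ⟨rfl, rfl⟩
  rw [h] at h1
  have := h1.2
  simp only [L3] at this
  linarith

lemma L2_ne_L3 (u v a b : ℝ) : L2 u v ≠ L3 a b := by
  intro h
  have h1 : ((b + 1, u, v) : ℝ × ℝ × ℝ) ∈ L2 u v := ⟨rfl, rfl⟩
  rw [h] at h1
  have := h1.1
  simp only [L3] at this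
  linarith

lemma L1_inter_L1 {u v u' v' : ℝ} (h : (L1 u v ∩ L1 u' v').Nonempty) :
    u = u' ∧ v = v' := by
  obtain ⟨p, ⟨h1, h2⟩, h3, h4⟩ := h
  exact ⟨h1.symm.trans h3, h2.symm.trans h4⟩

lemma L2_inter_L2 {u v u' v' : ℝ} (h : (L2 u v ∩ L2 u' v').Nonempty) :
    u = u' ∧ v = v' := by
  obtain ⟨p, ⟨h1, h2⟩, h3, h4⟩ := h
  exact ⟨h1.symm.trans h3, h2.symm.trans h4⟩

lemma L3_inter_L3 {u v u' v' : ℝ} (h : (L3 u v ∩ L3 u' v').Nonempty) :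
    u = u' ∧ v = v' := by
  obtain ⟨p, ⟨h1, h2⟩, h3, h4⟩ := h
  exact ⟨h2.symm.trans h4, h1.symm.trans h3⟩

lemma L1_inter_L2 {u v a b : ℝ} (h : (L1 u v ∩ L2 a b).Nonempty) : v = a := by
  obtain ⟨p, ⟨_, h2⟩, h3, _⟩ := h
  exact h2.symm.trans h3

lemma L1_inter_L3 {u v c d : ℝ} (h : (L1 u v ∩ L3 c d).Nonempty) : u = d := by
  obtain ⟨p, ⟨h1, _⟩, h3, _⟩ := h
  exact h1.symm.trans h3

lemma L2_inter_L3 {a b c d : ℝ} (h : (L2 a b ∩ L3 c d).Nonempty) : b = c := by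
  obtain ⟨p, ⟨_, h2⟩, _, h4⟩ := h
  exact h2.symm.trans h4

lemma aux {E : Set (ℝ × ℝ)} (hirr : ∀ u v : ℝ, (u, v) ∈ E → u ≠ v)
    {u v a b c d : ℝ} (h1 : (u, v) ∈ E) (h2 : (a, b) ∈ E) (h3 : (c, d) ∈ E)
    (i12 : (L1 u v ∩ L2 a b).Nonempty) (i13 : (L1 u v ∩ L3 c d).Nonempty)
    (i23 : (L2 a b ∩ L3 c d).Nonempty) :
    ∃ u v w : ℝ, u ≠ v ∧ v ≠ w ∧ w ≠ u ∧
      (u, v) ∈ E ∧ (v, w) ∈ E ∧ (w, u) ∈ E := by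
  have hva : v = a := L1_inter_L2 i12
  have hud : u = d := L1_inter_L3 i13
  have hbc : b = c := L2_inter_L3 i23
  subst hva; subst hud; subst hbc
  exact ⟨u, v, b, hirr _ _ h1, hirr _ _ h2, hirr _ _ h3, h1, h2, h3⟩

theorem stmt0 (E : Set (ℝ × ℝ)) (hfin : E.Finite)
    (hirr : ∀ u v : ℝ, (u, v) ∈ E → u ≠ v) :
    (∃ s₁ s₂ s₃ : Set (ℝ × ℝ × ℝ),
        s₁ ∈ lineFamily E ∧ s₂ ∈ lineFamily E ∧ s₃ ∈ lineFamily E ∧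
        s₁ ≠ s₂ ∧ s₁ ≠ s₃ ∧ s₂ ≠ s₃ ∧
        (s₁ ∩ s₂).Nonempty ∧ (s₁ ∩ s₃).Nonempty ∧ (s₂ ∩ s₃).Nonempty) ↔
      (∃ u v w : ℝ, u ≠ v ∧ v ≠ w ∧ w ≠ u ∧
        (u, v) ∈ E ∧ (v, w) ∈ E ∧ (w, u) ∈ E) := by
  constructor
  · rintro ⟨s₁, s₂, s₃, hm1, hm2, hm3, hne12, hne13, hne23, h12, h13, h23⟩
    obtain ⟨u1, v1, he1, rfl | rfl | rfl⟩ := hm1 <;>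
      obtain ⟨u2, v2, he2, rfl | rfl | rfl⟩ := hm2 <;>
      obtain ⟨u3, v3, he3, rfl | rfl | rfl⟩ := hm3
    -- 1 1 *
    · obtain ⟨hu, hv⟩ := L1_inter_L1 h12; exact absurd (by rw [hu, hv]) hne12
    · obtain ⟨hu, hv⟩ := L1_inter_L1 h12; exact absurd (by rw [hu, hv]) hne12
    · obtain ⟨hu, hv⟩ := L1_inter_L1 h12; exact absurd (by rw [hu, hv]) hne12
    -- 1 2 1
    · obtain ⟨hu, hv⟩ := L1_inter_L1 h13; exact absurd (by rw [hu, hv]) hne13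
    -- 1 2 2
    · obtain ⟨hu, hv⟩ := L2_inter_L2 h23; exact absurd (by rw [hu, hv]) hne23
    -- 1 2 3
    · exact aux hirr he1 he2 he3 h12 h13 h23
    -- 1 3 1
    · obtain ⟨hu, hv⟩ := L1_inter_L1 h13; exact absurd (by rw [hu, hv]) hne13
    -- 1 3 2
    · exact aux hirr he1 he3 he2 h13 h12 (nsymm h23)
    -- 1 3 3
    · obtain ⟨hu, hv⟩ := L3_inter_L3 h23; exact absurd (by rw [hu, hv]) hne23
    -- 2 1 1
    · obtain ⟨hu, hv⟩ := L1_inter_L1 h23; exact absurd (by rw [hu, hv]) hne23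
    -- 2 1 2
    · obtain ⟨hu, hv⟩ := L2_inter_L2 h13; exact absurd (by rw [hu, hv]) hne13
    -- 2 1 3
    · exact aux hirr he2 he1 he3 (nsymm h12) h23 h13
    -- 2 2 *
    · obtain ⟨hu, hv⟩ := L2_inter_L2 h12; exact absurd (by rw [hu, hv]) hne12
    · obtain ⟨hu, hv⟩ := L2_inter_L2 h12; exact absurd (by rw [hu, hv]) hne12
    · obtain ⟨hu, hv⟩ := L2_inter_L2 h12; exact absurd (by rw [hu, hv]) hne12
    -- 2 3 1
    · exact aux hirr he3 he1 he2 (nsymm h13) (nsymm h23) h12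
    -- 2 3 2
    · obtain ⟨hu, hv⟩ := L2_inter_L2 h13; exact absurd (by rw [hu, hv]) hne13
    -- 2 3 3
    · obtain ⟨hu, hv⟩ := L3_inter_L3 h23; exact absurd (by rw [hu, hv]) hne23
    -- 3 1 1
    · obtain ⟨hu, hv⟩ := L1_inter_L1 h23; exact absurd (by rw [hu, hv]) hne23
    -- 3 1 2
    · exact aux hirr he2 he3 he1 h23 (nsymm h12) (nsymm h13)
    -- 3 1 3
    · obtain ⟨hu, hv⟩ := L3_inter_L3 h13; exact absurd (by rw [hu, hv]) hne13
    -- 3 2 1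
    · exact aux hirr he3 he2 he1 (nsymm h23) (nsymm h13) (nsymm h12)
    -- 3 2 2
    · obtain ⟨hu, hv⟩ := L2_inter_L2 h23; exact absurd (by rw [hu, hv]) hne23
    -- 3 2 3
    · obtain ⟨hu, hv⟩ := L3_inter_L3 h13; exact absurd (by rw [hu, hv]) hne13
    -- 3 3 *
    · obtain ⟨hu, hv⟩ := L3_inter_L3 h12; exact absurd (by rw [hu, hv]) hne12
    · obtain ⟨hu, hv⟩ := L3_inter_L3 h12; exact absurd (by rw [hu, hv]) hne12
    · obtain ⟨hu, hv⟩ := L3_inter_L3 h12; exact absurd (by rw [hu, hv]) hne12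
  · rintro ⟨u, v, w, _, _, _, huv, hvw, hwu⟩
    refine ⟨L1 u v, L2 v w, L3 w u,
      ⟨u, v, huv, Or.inl rfl⟩, ⟨v, w, hvw, Or.inr (Or.inl rfl)⟩,
      ⟨w, u, hwu, Or.inr (Or.inr rfl)⟩,
      L1_ne_L2 u v v w, L1_ne_L3 u v w u, L2_ne_L3 v w w u,
      ⟨(u, v, w), ⟨rfl, rfl⟩, rfl, rfl⟩,
      ⟨(u, v, w), ⟨rfl, rfl⟩, rfl, rfl⟩,
      ⟨(u, v, w), ⟨rfl, rfl⟩, rfl, rfl⟩⟩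
end

section
/- Let N ≥ 1 be an integer and set U = N + 1. Let X = {1,…,N}, Y = {U·i : 1 ≤ i ≤ N}, Z = {U²·i : 1 ≤ i ≤ N}, W = {U³·i : 1 ≤ i ≤ N}. Let E₁ ⊆ X × Y × Z, E₂ ⊆ Y × Z × W, E₃ ⊆ Z × W × X, E₄ ⊆ W × X × Y. For each (x,y',z'') ∈ E₁ define the open orthant α(x,y',z'') = (−∞, y'+z'') × ℝ × ℝ × (x+y', ∞) × (−∞, x−z'') × ℝ ⊆ ℝ⁶; for each (y,z',w'') ∈ E₂ define β(y,z',w'') = (y+z', ∞) × (−∞, z'+w'') × ℝ × ℝ × ℝ × (−∞, y−w''); for each (z,w',x'') ∈ E₃ define γ(z,w',x'') = ℝ × (z+w', ∞) × (−∞, w'+x'') × ℝ × (x''−z, ∞) × ℝ; for each (w,x',y'') ∈ E₄ define δ(w,x',y'') = ℝ × ℝ × (w+x', ∞) × (−∞, x'+y'') × ℝ × (y''−w, ∞). Let S be the family of all these orthants. Then S contains four pairwise disjoint distinct members if and only if there exist x ∈ X, y ∈ Y, z ∈ Z, w ∈ W with (x,y,z) ∈ E₁, (y,z,w) ∈ E₂,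 (z,w,x) ∈ E₃, and (w,x,y) ∈ E₄. -/
/-- `ℝ⁶` as an iterated product. Coordinates of `p : R6` are
`p.1, p.2.1, p.2.2.1, p.2.2.2.1, p.2.2.2.2.1, p.2.2.2.2.2`. -/
abbrev R6 : Type := ℝ × ℝ × ℝ × ℝ × ℝ × ℝ

/-- `X = {1, …, N}` (as integers). -/
def XS (N : ℕ) : Set ℤ := {i | 1 ≤ i ∧ i ≤ (N : ℤ)}

/-- `Y = {U·m : 1 ≤ m ≤ N}` with `U = N + 1`. -/
def YS (N : ℕ) : Set ℤ := {i | ∃ m : ℤ, 1 ≤ m ∧ m ≤ (N : ℤ) ∧ i = ((N : ℤ) + 1) * m}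

/-- `Z = {U²·m : 1 ≤ m ≤ N}` with `U = N + 1`. -/
def ZS (N : ℕ) : Set ℤ := {i | ∃ m : ℤ, 1 ≤ m ∧ m ≤ (N : ℤ) ∧ i = ((N : ℤ) + 1) ^ 2 * m}

/-- `W = {U³·m : 1 ≤ m ≤ N}` with `U = N + 1`. -/
def WS (N : ℕ) : Set ℤ := {i | ∃ m : ℤ, 1 ≤ m ∧ m ≤ (N : ℤ) ∧ i = ((N : ℤ) + 1) ^ 3 * m}

/-- `α(x,y',z'') = (−∞, y'+z'') × ℝ × ℝ × (x+y', ∞) × (−∞, x−z'') × ℝ`. -/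
def oA (x y' z'' : ℤ) : Set R6 :=
  {p | p.1 < ((y' + z'' : ℤ) : ℝ) ∧ ((x + y' : ℤ) : ℝ) < p.2.2.2.1 ∧
       p.2.2.2.2.1 < ((x - z'' : ℤ) : ℝ)}

/-- `β(y,z',w'') = (y+z', ∞) × (−∞, z'+w'') × ℝ × ℝ × ℝ × (−∞, y−w'')`. -/
def oB (y z' w'' : ℤ) : Set R6 :=
  {p | ((y + z' : ℤ) : ℝ) < p.1 ∧ p.2.1 < ((z' + w'' : ℤ) : ℝ) ∧
       p.2.2.2.2.2 < ((y - w'' : ℤ) : ℝ)}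

/-- `γ(z,w',x'') = ℝ × (z+w', ∞) × (−∞, w'+x'') × ℝ × (x''−z, ∞) × ℝ`. -/
def oC (z w' x'' : ℤ) : Set R6 :=
  {p | ((z + w' : ℤ) : ℝ) < p.2.1 ∧ p.2.2.1 < ((w' + x'' : ℤ) : ℝ) ∧
       ((x'' - z : ℤ) : ℝ) < p.2.2.2.2.1}

/-- `δ(w,x',y'') = ℝ × ℝ × (w+x', ∞) × (−∞, x'+y'') × ℝ × (y''−w, ∞)`. -/
def oD (w x' y'' : ℤ) : Set R6 :=
  {p | ((w + x' : ℤ) : ℝ) < p.2.2.1 ∧ p.2.2.2.1 < ((x' + y'' : ℤ) : ℝ) ∧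
       ((y'' - w : ℤ) : ℝ) < p.2.2.2.2.2}

/-- The family `S` of all orthants `α`, `β`, `γ`, `δ` arising from the hyperedges. -/
def orthantFamily (E₁ E₂ E₃ E₄ : Set (ℤ × ℤ × ℤ)) : Set (Set R6) :=
  {s | (∃ e ∈ E₁, s = oA e.1 e.2.1 e.2.2) ∨ (∃ e ∈ E₂, s = oB e.1 e.2.1 e.2.2) ∨
       (∃ e ∈ E₃, s = oC e.1 e.2.1 e.2.2) ∨ (∃ e ∈ E₄, s = oD e.1 e.2.1 e.2.2)}


lemma digitEq {M r r' d d' : ℤ} (h1 : 1 ≤ r) (h2 : r < M) (h3 : 1 ≤ r') (h4 : r' < M)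
    (h : r + M * d = r' + M * d') : r = r' ∧ d = d' := by
  have hM : 0 < M := by linarith
  have hdd : d = d' := by
    rcases lt_trichotomy d d' with hlt | heq | hgt
    · have h5 : d + 1 ≤ d' := Int.add_one_le_iff.mpr hlt
      have := mul_le_mul_of_nonneg_left h5 hM.le
      rw [mul_add, mul_one] at this
      linarith
    · exact heq
    · have h5 : d' + 1 ≤ d := Int.add_one_le_iff.mpr hgt
      have := mul_le_mul_of_nonneg_left h5 hM.le
      rw [mul_add, mul_one] at this
      linarith
  subst hdd
  exact ⟨by linarith, rfl⟩

-- disjointness → inequality lemmas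
lemma dAB {x y' z'' y z' w'' : ℤ} (h : oA x y' z'' ∩ oB y z' w'' = ∅) :
    y' + z'' ≤ y + z' := by
  by_contra hc
  push_neg at hc
  have h1 : ((y : ℝ) + z') + 1 ≤ (y' : ℝ) + z'' := by exact_mod_cast Int.add_one_le_iff.mpr hc
  apply Set.eq_empty_iff_forall_notMem.mp h
    (((y : ℝ) + z') + 1/2, ((z' : ℝ) + w'') - 1, 0, ((x : ℝ) + y') + 1,
      ((x : ℝ) - z'') - 1, ((y : ℝ) - w'') - 1)
  refine ⟨⟨?_, ?_, ?_⟩, ?_, ?_, ?_⟩ <;> push_cast <;> linarith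

lemma dAC {x y' z'' z w' x'' : ℤ} (h : oA x y' z'' ∩ oC z w' x'' = ∅) :
    x + z ≤ x'' + z'' := by
  by_contra hc
  push_neg at hc
  have h1 : ((x'' : ℝ) - z) + 1 ≤ (x : ℝ) - z'' := by
    have : x'' + z'' + 1 ≤ x + z := Int.add_one_le_iff.mpr hc
    have h3 : ((x'' : ℝ) + z'' + 1) ≤ (x : ℝ) + z := by exact_mod_cast this
    linarith
  apply Set.eq_empty_iff_forall_notMem.mp h
    (((y' : ℝ) + z'') - 1, ((z : ℝ) + w') + 1, ((w' : ℝ) + x'') - 1, ((x : ℝ) + y') + 1,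
      ((x'' : ℝ) - z) + 1/2, 0)
  refine ⟨⟨?_, ?_, ?_⟩, ?_, ?_, ?_⟩ <;> push_cast <;> linarith

lemma dAD {x y' z'' w x' y'' : ℤ} (h : oA x y' z'' ∩ oD w x' y'' = ∅) :
    x' + y'' ≤ x + y' := by
  by_contra hc
  push_neg at hc
  have h1 : ((x : ℝ) + y') + 1 ≤ (x' : ℝ) + y'' := by exact_mod_cast Int.add_one_le_iff.mpr hc
  apply Set.eq_empty_iff_forall_notMem.mp h
    (((y' : ℝ) + z'') - 1, 0, ((w : ℝ) + x') + 1, ((x : ℝ) + y') + 1/2,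
      ((x : ℝ) - z'') - 1, ((y'' : ℝ) - w) + 1)
  refine ⟨⟨?_, ?_, ?_⟩, ?_, ?_, ?_⟩ <;> push_cast <;> linarith

lemma dBC {y z' w'' z w' x'' : ℤ} (h : oB y z' w'' ∩ oC z w' x'' = ∅) :
    z' + w'' ≤ z + w' := by
  by_contra hc
  push_neg at hc
  have h1 : ((z : ℝ) + w') + 1 ≤ (z' : ℝ) + w'' := by exact_mod_cast Int.add_one_le_iff.mpr hc
  apply Set.eq_empty_iff_forall_notMem.mp h
    (((y : ℝ) + z') + 1, ((z : ℝ) + w') + 1/2, ((w' : ℝ) + x'') - 1, 0,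
      ((x'' : ℝ) - z) + 1, ((y : ℝ) - w'') - 1)
  refine ⟨⟨?_, ?_, ?_⟩, ?_, ?_, ?_⟩ <;> push_cast <;> linarith

lemma dBD {y z' w'' w x' y'' : ℤ} (h : oB y z' w'' ∩ oD w x' y'' = ∅) :
    y + w ≤ y'' + w'' := by
  by_contra hc
  push_neg at hc
  have h1 : ((y'' : ℝ) - w) + 1 ≤ (y : ℝ) - w'' := by
    have : y'' + w'' + 1 ≤ y + w := Int.add_one_le_iff.mpr hc
    have h3 : ((y'' : ℝ) + w'' + 1) ≤ (y : ℝ) + w := by exact_mod_cast this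
    linarith
  apply Set.eq_empty_iff_forall_notMem.mp h
    (((y : ℝ) + z') + 1, ((z' : ℝ) + w'') - 1, ((w : ℝ) + x') + 1, ((x' : ℝ) + y'') - 1,
      0, ((y'' : ℝ) - w) + 1/2)
  refine ⟨⟨?_, ?_, ?_⟩, ?_, ?_, ?_⟩ <;> push_cast <;> linarith

lemma dCD {z w' x'' w x' y'' : ℤ} (h : oC z w' x'' ∩ oD w x' y'' = ∅) :
    w' + x'' ≤ w + x' := by
  by_contra hc
  push_neg at hc
  have h1 : ((w : ℝ) + x') + 1 ≤ (w' : ℝ) + x'' := by exact_mod_cast Int.add_one_le_iff.mpr hc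
  apply Set.eq_empty_iff_forall_notMem.mp h
    (0, ((z : ℝ) + w') + 1, ((w : ℝ) + x') + 1/2, ((x' : ℝ) + y'') - 1,
      ((x'' : ℝ) - z) + 1, ((y'' : ℝ) - w) + 1)
  refine ⟨⟨?_, ?_, ?_⟩, ?_, ?_, ?_⟩ <;> push_cast <;> linarith

lemma interAA (x y z x' y' z' : ℤ) : (oA x y z ∩ oA x' y' z').Nonempty := by
  refine ⟨(min ((y : ℝ) + z) ((y' : ℝ) + z') - 1, 0, 0,
           max ((x : ℝ) + y) ((x' : ℝ) + y') + 1,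
           min ((x : ℝ) - z) ((x' : ℝ) - z') - 1, 0), ⟨?_, ?_, ?_⟩, ?_, ?_, ?_⟩ <;>
    push_cast <;>
    [ linarith [min_le_left ((y : ℝ) + z) ((y' : ℝ) + z')];
      linarith [le_max_left ((x : ℝ) + y) ((x' : ℝ) + y')];
      linarith [min_le_left ((x : ℝ) - z) ((x' : ℝ) - z')];
      linarith [min_le_right ((y : ℝ) + z) ((y' : ℝ) + z')];
      linarith [le_max_right ((x : ℝ) + y) ((x' : ℝ) + y')];
      linarith [min_le_right ((x : ℝ) - z) ((x' : ℝ) - z')] ]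

lemma interBB (y z w y' z' w' : ℤ) : (oB y z w ∩ oB y' z' w').Nonempty := by
  refine ⟨(max ((y : ℝ) + z) ((y' : ℝ) + z') + 1,
           min ((z : ℝ) + w) ((z' : ℝ) + w') - 1, 0, 0, 0,
           min ((y : ℝ) - w) ((y' : ℝ) - w') - 1), ⟨?_, ?_, ?_⟩, ?_, ?_, ?_⟩ <;>
    push_cast <;>
    [ linarith [le_max_left ((y : ℝ) + z) ((y' : ℝ) + z')];
      linarith [min_le_left ((z : ℝ) + w) ((z' : ℝ) + w')];
      linarith [min_le_left ((y : ℝ) - w) ((y' : ℝ) - w')];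
      linarith [le_max_right ((y : ℝ) + z) ((y' : ℝ) + z')];
      linarith [min_le_right ((z : ℝ) + w) ((z' : ℝ) + w')];
      linarith [min_le_right ((y : ℝ) - w) ((y' : ℝ) - w')] ]

lemma interCC (z w x z' w' x' : ℤ) : (oC z w x ∩ oC z' w' x').Nonempty := by
  refine ⟨(0, max ((z : ℝ) + w) ((z' : ℝ) + w') + 1,
           min ((w : ℝ) + x) ((w' : ℝ) + x') - 1, 0,
           max ((x : ℝ) - z) ((x' : ℝ) - z') + 1, 0), ⟨?_, ?_, ?_⟩, ?_, ?_, ?_⟩ <;>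
    push_cast <;>
    [ linarith [le_max_left ((z : ℝ) + w) ((z' : ℝ) + w')];
      linarith [min_le_left ((w : ℝ) + x) ((w' : ℝ) + x')];
      linarith [le_max_left ((x : ℝ) - z) ((x' : ℝ) - z')];
      linarith [le_max_right ((z : ℝ) + w) ((z' : ℝ) + w')];
      linarith [min_le_right ((w : ℝ) + x) ((w' : ℝ) + x')];
      linarith [le_max_right ((x : ℝ) - z) ((x' : ℝ) - z')] ]

lemma interDD (w x y w' x' y' : ℤ) : (oD w x y ∩ oD w' x' y').Nonempty := by
  refine ⟨(0, 0, max ((w : ℝ) + x) ((w' : ℝ) + x') + 1,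
           min ((x : ℝ) + y) ((x' : ℝ) + y') - 1, 0,
           max ((y : ℝ) - w) ((y' : ℝ) - w') + 1), ⟨?_, ?_, ?_⟩, ?_, ?_, ?_⟩ <;>
    push_cast <;>
    [ linarith [le_max_left ((w : ℝ) + x) ((w' : ℝ) + x')];
      linarith [min_le_left ((x : ℝ) + y) ((x' : ℝ) + y')];
      linarith [le_max_left ((y : ℝ) - w) ((y' : ℝ) - w')];
      linarith [le_max_right ((w : ℝ) + x) ((w' : ℝ) + x')];
      linarith [min_le_right ((x : ℝ) + y) ((x' : ℝ) + y')];
      linarith [le_max_right ((y : ℝ) - w) ((y' : ℝ) - w')] ]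

-- kill lemmas
lemma killAA {C : Prop} {x y z x' y' z' : ℤ} (h : oA x y z ∩ oA x' y' z' = ∅) : C :=
  absurd h (interAA x y z x' y' z').ne_empty
lemma killBB {C : Prop} {y z w y' z' w' : ℤ} (h : oB y z w ∩ oB y' z' w' = ∅) : C :=
  absurd h (interBB y z w y' z' w').ne_empty
lemma killCC {C : Prop} {z w x z' w' x' : ℤ} (h : oC z w x ∩ oC z' w' x' = ∅) : C :=
  absurd h (interCC z w x z' w' x').ne_empty
lemma killDD {C : Prop} {w x y w' x' y' : ℤ} (h : oD w x y ∩ oD w' x' y' = ∅) : C :=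
  absurd h (interDD w x y w' x' y').ne_empty

lemma flipEmpty {s t : Set R6} (h : s ∩ t = ∅) : t ∩ s = ∅ := by
  rw [Set.inter_comm]; exact h

-- forward disjointness
lemma fAB (x y z w : ℤ) : oA x y z ∩ oB y z w = ∅ := by
  apply Set.eq_empty_iff_forall_notMem.mpr
  rintro p ⟨⟨h1, -, -⟩, h2, -, -⟩
  exact absurd (h2.trans h1) (lt_irrefl _)

lemma fAC (x y z w : ℤ) : oA x y z ∩ oC z w x = ∅ := by
  apply Set.eq_empty_iff_forall_notMem.mpr
  rintro p ⟨⟨-, -, h1⟩, -, -, h2⟩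
  exact absurd (h2.trans h1) (lt_irrefl _)

lemma fAD (x y z w : ℤ) : oA x y z ∩ oD w x y = ∅ := by
  apply Set.eq_empty_iff_forall_notMem.mpr
  rintro p ⟨⟨-, h1, -⟩, -, h2, -⟩
  exact absurd (h1.trans h2) (lt_irrefl _)

lemma fBC (x y z w : ℤ) : oB y z w ∩ oC z w x = ∅ := by
  apply Set.eq_empty_iff_forall_notMem.mpr
  rintro p ⟨⟨-, h1, -⟩, h2, -, -⟩
  exact absurd (h2.trans h1) (lt_irrefl _)

lemma fBD (x y z w : ℤ) : oB y z w ∩ oD w x y = ∅ := by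
  apply Set.eq_empty_iff_forall_notMem.mpr
  rintro p ⟨⟨-, -, h1⟩, -, -, h2⟩
  exact absurd (h2.trans h1) (lt_irrefl _)

lemma fCD (x y z w : ℤ) : oC z w x ∩ oD w x y = ∅ := by
  apply Set.eq_empty_iff_forall_notMem.mpr
  rintro p ⟨⟨-, h1, -⟩, h2, -, -⟩
  exact absurd (h2.trans h1) (lt_irrefl _)

lemma neOfDisj {s t : Set R6} (h : s ∩ t = ∅) (hs : s.Nonempty) : s ≠ t := by
  intro he
  exact hs.ne_empty (by rw [← h, he, Set.inter_self])

lemma neA (x y z : ℤ) : (oA x y z).Nonempty := by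
  have := interAA x y z x y z; rwa [Set.inter_self] at this
lemma neB (y z w : ℤ) : (oB y z w).Nonempty := by
  have := interBB y z w y z w; rwa [Set.inter_self] at this
lemma neC (z w x : ℤ) : (oC z w x).Nonempty := by
  have := interCC z w x z w x; rwa [Set.inter_self] at this

set_option maxHeartbeats 1000000 in
lemma mainLem (N : ℕ) (E₁ E₂ E₃ E₄ : Set (ℤ × ℤ × ℤ))
    (hE₁ : ∀ e ∈ E₁, e.1 ∈ XS N ∧ e.2.1 ∈ YS N ∧ e.2.2 ∈ ZS N)
    (hE₂ : ∀ e ∈ E₂, e.1 ∈ YS N ∧ e.2.1 ∈ ZS N ∧ e.2.2 ∈ WS N)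
    (hE₃ : ∀ e ∈ E₃, e.1 ∈ ZS N ∧ e.2.1 ∈ WS N ∧ e.2.2 ∈ XS N)
    (hE₄ : ∀ e ∈ E₄, e.1 ∈ WS N ∧ e.2.1 ∈ XS N ∧ e.2.2 ∈ YS N)
    (eA eB eC eD : ℤ × ℤ × ℤ)
    (hA : eA ∈ E₁) (hB : eB ∈ E₂) (hC : eC ∈ E₃) (hD : eD ∈ E₄)
    (hAB : oA eA.1 eA.2.1 eA.2.2 ∩ oB eB.1 eB.2.1 eB.2.2 = ∅)
    (hAC : oA eA.1 eA.2.1 eA.2.2 ∩ oC eC.1 eC.2.1 eC.2.2 = ∅)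
    (hAD : oA eA.1 eA.2.1 eA.2.2 ∩ oD eD.1 eD.2.1 eD.2.2 = ∅)
    (hBC : oB eB.1 eB.2.1 eB.2.2 ∩ oC eC.1 eC.2.1 eC.2.2 = ∅)
    (hBD : oB eB.1 eB.2.1 eB.2.2 ∩ oD eD.1 eD.2.1 eD.2.2 = ∅)
    (hCD : oC eC.1 eC.2.1 eC.2.2 ∩ oD eD.1 eD.2.1 eD.2.2 = ∅) :
    ∃ x y z w : ℤ, x ∈ XS N ∧ y ∈ YS N ∧ z ∈ ZS N ∧ w ∈ WS N ∧
      (x, y, z) ∈ E₁ ∧ (y, z, w) ∈ E₂ ∧ (z, w, x) ∈ E₃ ∧ (w, x, y) ∈ E₄ := by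
  obtain ⟨x, y₁, z₁⟩ := eA
  obtain ⟨y, z₂, w₁⟩ := eB
  obtain ⟨z, w₂, x₁⟩ := eC
  obtain ⟨w, x₂, y₂⟩ := eD
  simp only at hAB hAC hAD hBC hBD hCD
  have hh1 := hE₁ _ hA
  have hh2 := hE₂ _ hB
  have hh3 := hE₃ _ hC
  have hh4 := hE₄ _ hD
  dsimp only at hh1 hh2 hh3 hh4
  obtain ⟨⟨hx1, hxN⟩, hy₁, hz₁⟩ := hh1
  obtain ⟨hy, hz₂, hw₁⟩ := hh2
  obtain ⟨hz, hw₂, ⟨hx₁1, hx₁N⟩⟩ := hh3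
  obtain ⟨hw, ⟨hx₂1, hx₂N⟩, hy₂⟩ := hh4
  obtain ⟨a', ha'1, ha'N, rfl⟩ := hy₁
  obtain ⟨b'', hb''1, hb''N, rfl⟩ := hz₁
  obtain ⟨a, ha1, haN, rfl⟩ := hy
  obtain ⟨b', hb'1, hb'N, rfl⟩ := hz₂
  obtain ⟨c'', hc''1, hc''N, rfl⟩ := hw₁
  obtain ⟨b, hb1, hbN, rfl⟩ := hz
  obtain ⟨c', hc'1, hc'N, rfl⟩ := hw₂
  obtain ⟨c, hc1, hcN, rfl⟩ := hw
  obtain ⟨a'', ha''1, ha''N, rfl⟩ := hy₂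
  set U : ℤ := (N : ℤ) + 1 with hU
  clear_value U
  have hU2 : 2 ≤ U := by omega
  -- six inequalities
  have i1 := dAB hAB
  have i2 := dAC hAC
  have i3 := dAD hAD
  have i4 := dBC hBC
  have i5 := dBD hBD
  have i6 := dCD hCD
  clear hAB hAC hAD hBC hBD hCD
  -- bounds
  have hUsq : U ≤ U ^ 2 := by nlinarith
  have hUcb : U ^ 2 ≤ U ^ 3 := by nlinarith
  have bnd1 : ∀ t : ℤ, 1 ≤ t → t ≤ (N : ℤ) → 1 ≤ U * t ∧ U * t < U ^ 2 := by
    intro t h1 h2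
    constructor <;> nlinarith
  have bnd2 : ∀ t : ℤ, 1 ≤ t → t ≤ (N : ℤ) → 1 ≤ U ^ 2 * t ∧ U ^ 2 * t < U ^ 3 := by
    intro t h1 h2
    constructor <;> nlinarith
  obtain ⟨p1, p2⟩ := bnd1 a ha1 haN
  obtain ⟨p1', p2'⟩ := bnd1 a' ha'1 ha'N
  obtain ⟨p1'', p2''⟩ := bnd1 a'' ha''1 ha''N
  obtain ⟨q1, q2⟩ := bnd2 b hb1 hbN
  obtain ⟨q1', q2'⟩ := bnd2 b' hb'1 hb'N
  obtain ⟨q1'', q2''⟩ := bnd2 b'' hb''1 hb''N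
  have hxU : x < U := by omega
  have hx₁U : x₁ < U := by omega
  have hx₂U : x₂ < U := by omega
  have hU0 : U ≠ 0 := by omega
  have hU20 : U ^ 2 ≠ 0 := pow_ne_zero _ hU0
  -- equalities
  have e1 : U * a' + U ^ 2 * b'' = U * a + U ^ 2 * b' := le_antisymm i1 (by linarith)
  have e2 : x + U ^ 2 * b = x₁ + U ^ 2 * b'' := le_antisymm i2 (by linarith)
  have e3 : x₂ + U * a'' = x + U * a' := le_antisymm i3 (by linarith)
  have e4 : U ^ 2 * b' + U ^ 3 * c'' = U ^ 2 * b + U ^ 3 * c' := le_antisymm i4 (by linarith)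
  have e5 : U * a + U ^ 3 * c = U * a'' + U ^ 3 * c'' := le_antisymm i5 (by linarith)
  have e6 : x₁ + U ^ 3 * c' = x₂ + U ^ 3 * c := le_antisymm (by linarith) (by linarith)
  -- digit extraction
  obtain ⟨g1, g1'⟩ := digitEq p1' p2' p1 p2 e1
  obtain ⟨g2, g2'⟩ := digitEq hx1 (by linarith) hx₁1 (by linarith) e2
  obtain ⟨g3, g3'⟩ := digitEq hx₂1 hx₂U hx1 hxU e3
  obtain ⟨g4, g4'⟩ := digitEq q1' q2' q1 q2 e4
  obtain ⟨g5, g5'⟩ := digitEq p1 (by linarith) p1'' (by linarith) e5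
  obtain ⟨g6, g6'⟩ := digitEq hx₁1 (by linarith) hx₂1 (by linarith) e6
  have ga' : a' = a := mul_left_cancel₀ hU0 g1
  have ga'' : a'' = a := by
    have h := mul_left_cancel₀ hU0 g5
    omega
  have gb' : b' = b := mul_left_cancel₀ hU20 g4
  have gb'' : b'' = b := by omega
  have gc' : c' = c := g6'
  have gc'' : c'' = c := by omega
  have gx₁ : x₁ = x := g2.symm
  have gx₂ : x₂ = x := g3
  rw [ga', gb''] at hA
  rw [gb', gc''] at hB
  rw [gc', gx₁] at hC
  rw [gx₂, ga''] at hD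
  exact ⟨x, U * a, U ^ 2 * b, U ^ 3 * c, ⟨hx1, hxN⟩, ⟨a, ha1, haN, by rw [hU]⟩,
    ⟨b, hb1, hbN, by rw [hU]⟩, ⟨c, hc1, hcN, by rw [hU]⟩, hA, hB, hC, hD⟩


set_option maxHeartbeats 4000000 in
theorem stmt1 (N : ℕ) (hN : 1 ≤ N)
    (E₁ E₂ E₃ E₄ : Set (ℤ × ℤ × ℤ))
    (hE₁ : ∀ e ∈ E₁, e.1 ∈ XS N ∧ e.2.1 ∈ YS N ∧ e.2.2 ∈ ZS N)
    (hE₂ : ∀ e ∈ E₂, e.1 ∈ YS N ∧ e.2.1 ∈ ZS N ∧ e.2.2 ∈ WS N)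
    (hE₃ : ∀ e ∈ E₃, e.1 ∈ ZS N ∧ e.2.1 ∈ WS N ∧ e.2.2 ∈ XS N)
    (hE₄ : ∀ e ∈ E₄, e.1 ∈ WS N ∧ e.2.1 ∈ XS N ∧ e.2.2 ∈ YS N) :
    (∃ s₁ s₂ s₃ s₄ : Set R6,
        s₁ ∈ orthantFamily E₁ E₂ E₃ E₄ ∧ s₂ ∈ orthantFamily E₁ E₂ E₃ E₄ ∧
        s₃ ∈ orthantFamily E₁ E₂ E₃ E₄ ∧ s₄ ∈ orthantFamily E₁ E₂ E₃ E₄ ∧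
        s₁ ≠ s₂ ∧ s₁ ≠ s₃ ∧ s₁ ≠ s₄ ∧ s₂ ≠ s₃ ∧ s₂ ≠ s₄ ∧ s₃ ≠ s₄ ∧
        s₁ ∩ s₂ = ∅ ∧ s₁ ∩ s₃ = ∅ ∧ s₁ ∩ s₄ = ∅ ∧
        s₂ ∩ s₃ = ∅ ∧ s₂ ∩ s₄ = ∅ ∧ s₃ ∩ s₄ = ∅) ↔
      (∃ x y z w : ℤ, x ∈ XS N ∧ y ∈ YS N ∧ z ∈ ZS N ∧ w ∈ WS N ∧
        (x, y, z) ∈ E₁ ∧ (y, z, w) ∈ E₂ ∧ (z, w, x) ∈ E₃ ∧ (w, x, y) ∈ E₄) := by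
  constructor
  · rintro ⟨s₁, s₂, s₃, s₄, m1, m2, m3, m4, -, -, -, -, -, -, d12, d13, d14, d23, d24, d34⟩
    have d21 := flipEmpty d12
    have d31 := flipEmpty d13
    have d41 := flipEmpty d14
    have d32 := flipEmpty d23
    have d42 := flipEmpty d24
    have d43 := flipEmpty d34
    rcases m1 with ⟨e1, he1, rfl⟩ | ⟨e1, he1, rfl⟩ | ⟨e1, he1, rfl⟩ | ⟨e1, he1, rfl⟩ <;>
      rcases m2 with ⟨e2, he2, rfl⟩ | ⟨e2, he2, rfl⟩ | ⟨e2, he2, rfl⟩ | ⟨e2, he2, rfl⟩ <;>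
      rcases m3 with ⟨e3, he3, rfl⟩ | ⟨e3, he3, rfl⟩ | ⟨e3, he3, rfl⟩ | ⟨e3, he3, rfl⟩ <;>
      rcases m4 with ⟨e4, he4, rfl⟩ | ⟨e4, he4, rfl⟩ | ⟨e4, he4, rfl⟩ | ⟨e4, he4, rfl⟩ <;>
      first
        | exact killAA d12
        | exact killBB d12
        | exact killCC d12
        | exact killDD d12
        | exact killAA d13
        | exact killBB d13
        | exact killCC d13
        | exact killDD d13
        | exact killAA d14
        | exact killBB d14
        | exact killCC d14
        | exact killDD d14
        | exact killAA d23
        | exact killBB d23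
        | exact killCC d23
        | exact killDD d23
        | exact killAA d24
        | exact killBB d24
        | exact killCC d24
        | exact killDD d24
        | exact killAA d34
        | exact killBB d34
        | exact killCC d34
        | exact killDD d34
        | exact mainLem N E₁ E₂ E₃ E₄ hE₁ hE₂ hE₃ hE₄ e1 e2 e3 e4 he1 he2 he3 he4 d12 d13 d14 d23 d24 d34
        | exact mainLem N E₁ E₂ E₃ E₄ hE₁ hE₂ hE₃ hE₄ e1 e2 e4 e3 he1 he2 he4 he3 d12 d14 d13 d24 d23 d43
        | exact mainLem N E₁ E₂ E₃ E₄ hE₁ hE₂ hE₃ hE₄ e1 e3 e2 e4 he1 he3 he2 he4 d13 d12 d14 d32 d34 d24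
        | exact mainLem N E₁ E₂ E₃ E₄ hE₁ hE₂ hE₃ hE₄ e1 e3 e4 e2 he1 he3 he4 he2 d13 d14 d12 d34 d32 d42
        | exact mainLem N E₁ E₂ E₃ E₄ hE₁ hE₂ hE₃ hE₄ e1 e4 e2 e3 he1 he4 he2 he3 d14 d12 d13 d42 d43 d23
        | exact mainLem N E₁ E₂ E₃ E₄ hE₁ hE₂ hE₃ hE₄ e1 e4 e3 e2 he1 he4 he3 he2 d14 d13 d12 d43 d42 d32
        | exact mainLem N E₁ E₂ E₃ E₄ hE₁ hE₂ hE₃ hE₄ e2 e1 e3 e4 he2 he1 he3 he4 d21 d23 d24 d13 d14 d34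
        | exact mainLem N E₁ E₂ E₃ E₄ hE₁ hE₂ hE₃ hE₄ e2 e1 e4 e3 he2 he1 he4 he3 d21 d24 d23 d14 d13 d43
        | exact mainLem N E₁ E₂ E₃ E₄ hE₁ hE₂ hE₃ hE₄ e2 e3 e1 e4 he2 he3 he1 he4 d23 d21 d24 d31 d34 d14
        | exact mainLem N E₁ E₂ E₃ E₄ hE₁ hE₂ hE₃ hE₄ e2 e3 e4 e1 he2 he3 he4 he1 d23 d24 d21 d34 d31 d41
        | exact mainLem N E₁ E₂ E₃ E₄ hE₁ hE₂ hE₃ hE₄ e2 e4 e1 e3 he2 he4 he1 he3 d24 d21 d23 d41 d43 d13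
        | exact mainLem N E₁ E₂ E₃ E₄ hE₁ hE₂ hE₃ hE₄ e2 e4 e3 e1 he2 he4 he3 he1 d24 d23 d21 d43 d41 d31
        | exact mainLem N E₁ E₂ E₃ E₄ hE₁ hE₂ hE₃ hE₄ e3 e1 e2 e4 he3 he1 he2 he4 d31 d32 d34 d12 d14 d24
        | exact mainLem N E₁ E₂ E₃ E₄ hE₁ hE₂ hE₃ hE₄ e3 e1 e4 e2 he3 he1 he4 he2 d31 d34 d32 d14 d12 d42
        | exact mainLem N E₁ E₂ E₃ E₄ hE₁ hE₂ hE₃ hE₄ e3 e2 e1 e4 he3 he2 he1 he4 d32 d31 d34 d21 d24 d14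
        | exact mainLem N E₁ E₂ E₃ E₄ hE₁ hE₂ hE₃ hE₄ e3 e2 e4 e1 he3 he2 he4 he1 d32 d34 d31 d24 d21 d41
        | exact mainLem N E₁ E₂ E₃ E₄ hE₁ hE₂ hE₃ hE₄ e3 e4 e1 e2 he3 he4 he1 he2 d34 d31 d32 d41 d42 d12
        | exact mainLem N E₁ E₂ E₃ E₄ hE₁ hE₂ hE₃ hE₄ e3 e4 e2 e1 he3 he4 he2 he1 d34 d32 d31 d42 d41 d21
        | exact mainLem N E₁ E₂ E₃ E₄ hE₁ hE₂ hE₃ hE₄ e4 e1 e2 e3 he4 he1 he2 he3 d41 d42 d43 d12 d13 d23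
        | exact mainLem N E₁ E₂ E₃ E₄ hE₁ hE₂ hE₃ hE₄ e4 e1 e3 e2 he4 he1 he3 he2 d41 d43 d42 d13 d12 d32
        | exact mainLem N E₁ E₂ E₃ E₄ hE₁ hE₂ hE₃ hE₄ e4 e2 e1 e3 he4 he2 he1 he3 d42 d41 d43 d21 d23 d13
        | exact mainLem N E₁ E₂ E₃ E₄ hE₁ hE₂ hE₃ hE₄ e4 e2 e3 e1 he4 he2 he3 he1 d42 d43 d41 d23 d21 d31
        | exact mainLem N E₁ E₂ E₃ E₄ hE₁ hE₂ hE₃ hE₄ e4 e3 e1 e2 he4 he3 he1 he2 d43 d41 d42 d31 d32 d12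
        | exact mainLem N E₁ E₂ E₃ E₄ hE₁ hE₂ hE₃ hE₄ e4 e3 e2 e1 he4 he3 he2 he1 d43 d42 d41 d32 d31 d21
  · rintro ⟨x, y, z, w, hx, hy, hz, hw, h1, h2, h3, h4⟩
    exact ⟨oA x y z, oB y z w, oC z w x, oD w x y,
      Or.inl ⟨(x, y, z), h1, rfl⟩,
      Or.inr (Or.inl ⟨(y, z, w), h2, rfl⟩),
      Or.inr (Or.inr (Or.inl ⟨(z, w, x), h3, rfl⟩)),
      Or.inr (Or.inr (Or.inr ⟨(w, x, y), h4, rfl⟩)),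
      neOfDisj (fAB x y z w) (neA x y z),
      neOfDisj (fAC x y z w) (neA x y z),
      neOfDisj (fAD x y z w) (neA x y z),
      neOfDisj (fBC x y z w) (neB y z w),
      neOfDisj (fBD x y z w) (neB y z w),
      neOfDisj (fCD x y z w) (neC z w x),
      fAB x y z w, fAC x y z w, fAD x y z w, fBC x y z w, fBD x y z w, fCD x y z w⟩
end

section
/- Let N ≥ 1 be an integer and set U = N + 1. Suppose x, x', x'' ∈ {1,…,N}; y, y', y'' ∈ {U·i : 1 ≤ i ≤ N}; z, z', z'' ∈ {U²·i : 1 ≤ i ≤ N}; w, w', w'' ∈ {U³·i : 1 ≤ i ≤ N}; and the following six inequalities hold: y' + z'' ≤ y + z', z' + w'' ≤ z + w', w' + x'' ≤ w + x', x' + y'' ≤ x + y', x − z'' ≤ x'' − z, and y − w'' ≤ y'' − w. Then x = x' = x'', y = y' = y'', z = z' = z'', and w = w' = w''. -/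
set_option maxHeartbeats 1000000

lemma key_split (U a b : ℤ) (hU : 0 < U) (h : a = U * b) (hl : -U < a) (hr : a < U) :
    a = 0 ∧ b = 0 := by
  have hb : b = 0 := by
    rcases lt_trichotomy b 0 with h' | h' | h'
    · nlinarith
    · exact h'
    · nlinarith
  exact ⟨by simp [h, hb], hb⟩

theorem stmt2 (N : ℕ) (hN : 1 ≤ N)
    (x x' x'' y y' y'' z z' z'' w w' w'' : ℤ)
    (hx : 1 ≤ x ∧ x ≤ (N : ℤ)) (hx' : 1 ≤ x' ∧ x' ≤ (N : ℤ))
    (hx'' : 1 ≤ x'' ∧ x'' ≤ (N : ℤ))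
    (hy : ∃ i : ℤ, 1 ≤ i ∧ i ≤ (N : ℤ) ∧ y = ((N : ℤ) + 1) * i)
    (hy' : ∃ i : ℤ, 1 ≤ i ∧ i ≤ (N : ℤ) ∧ y' = ((N : ℤ) + 1) * i)
    (hy'' : ∃ i : ℤ, 1 ≤ i ∧ i ≤ (N : ℤ) ∧ y'' = ((N : ℤ) + 1) * i)
    (hz : ∃ i : ℤ, 1 ≤ i ∧ i ≤ (N : ℤ) ∧ z = ((N : ℤ) + 1) ^ 2 * i)
    (hz' : ∃ i : ℤ, 1 ≤ i ∧ i ≤ (N : ℤ) ∧ z' = ((N : ℤ) + 1) ^ 2 * i)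
    (hz'' : ∃ i : ℤ, 1 ≤ i ∧ i ≤ (N : ℤ) ∧ z'' = ((N : ℤ) + 1) ^ 2 * i)
    (hw : ∃ i : ℤ, 1 ≤ i ∧ i ≤ (N : ℤ) ∧ w = ((N : ℤ) + 1) ^ 3 * i)
    (hw' : ∃ i : ℤ, 1 ≤ i ∧ i ≤ (N : ℤ) ∧ w' = ((N : ℤ) + 1) ^ 3 * i)
    (hw'' : ∃ i : ℤ, 1 ≤ i ∧ i ≤ (N : ℤ) ∧ w'' = ((N : ℤ) + 1) ^ 3 * i)
    (h1 : y' + z'' ≤ y + z') (h2 : z' + w'' ≤ z + w')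
    (h3 : w' + x'' ≤ w + x') (h4 : x' + y'' ≤ x + y')
    (h5 : x - z'' ≤ x'' - z) (h6 : y - w'' ≤ y'' - w) :
    (x = x' ∧ x' = x'') ∧ (y = y' ∧ y' = y'') ∧
      (z = z' ∧ z' = z'') ∧ (w = w' ∧ w' = w'') := by
  set U : ℤ := (N : ℤ) + 1 with hUdef
  have hU : 0 < U := by positivity
  have hNU : (N : ℤ) < U := by omega
  obtain ⟨b, hb1, hb2, rfl⟩ := hy
  obtain ⟨b', hb'1, hb'2, rfl⟩ := hy'
  obtain ⟨b'', hb''1, hb''2, rfl⟩ := hy''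
  obtain ⟨c, hc1, hc2, rfl⟩ := hz
  obtain ⟨c', hc'1, hc'2, rfl⟩ := hz'
  obtain ⟨c'', hc''1, hc''2, rfl⟩ := hz''
  obtain ⟨d, hd1, hd2, rfl⟩ := hw
  obtain ⟨d', hd'1, hd'2, rfl⟩ := hw'
  obtain ⟨d'', hd''1, hd''2, rfl⟩ := hw''
  obtain ⟨hx1, hx2⟩ := hx
  obtain ⟨hx'1, hx'2⟩ := hx'
  obtain ⟨hx''1, hx''2⟩ := hx''
  -- six equalities
  have e1 : U * b' + U ^ 2 * c'' = U * b + U ^ 2 * c' := le_antisymm h1 (by linarith)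
  have e2 : U ^ 2 * c' + U ^ 3 * d'' = U ^ 2 * c + U ^ 3 * d' := le_antisymm h2 (by linarith)
  have e3 : U ^ 3 * d' + x'' = U ^ 3 * d + x' := le_antisymm h3 (by linarith)
  have e4 : x' + U * b'' = x + U * b' := le_antisymm h4 (by linarith)
  have e5 : x - U ^ 2 * c'' = x'' - U ^ 2 * c := le_antisymm h5 (by linarith)
  have e6 : U * b - U ^ 3 * d'' = U * b'' - U ^ 3 * d := le_antisymm h6 (by linarith)
  have hUne : U ≠ 0 := ne_of_gt hU
  have hU2 : (0:ℤ) < U ^ 2 := by positivity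
  have hU3 : (0:ℤ) < U ^ 3 := by positivity
  have hUU2 : U ≤ U ^ 2 := by nlinarith
  have hUU3 : U ≤ U ^ 3 := by nlinarith
  -- E4 : x' - x = U * (b' - b'')
  have k4 := key_split U (x' - x) (b' - b'') hU (by linarith [e4]) (by linarith) (by linarith)
  -- E3 : x'' - x' = U^3 * (d - d')
  have k3 := key_split (U ^ 3) (x'' - x') (d - d') hU3 (by linarith [e3]) (by linarith) (by linarith)
  -- E1 : b' - b = U * (c' - c'')
  have c1 : U * (b' - b) = U * (U * (c' - c'')) := by linear_combination e1
  have k1 := key_split U (b' - b) (c' - c'') hU (mul_left_cancel₀ hUne c1) (by linarith) (by linarith)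
  -- E2 : c' - c = U * (d' - d'')
  have c2 : U ^ 2 * (c' - c) = U ^ 2 * (U * (d' - d'')) := by linear_combination e2
  have k2 := key_split U (c' - c) (d' - d'') hU
    (mul_left_cancel₀ (ne_of_gt hU2) c2) (by linarith) (by linarith)
  -- E5 : x - x'' = U^2 * (c'' - c)
  have k5 := key_split (U ^ 2) (x - x'') (c'' - c) hU2 (by linarith [e5]) (by linarith) (by linarith)
  -- E6 : b - b'' = U^2 * (d'' - d)
  have c6 : U * (b - b'') = U * (U ^ 2 * (d'' - d)) := by linear_combination e6
  have k6 := key_split (U ^ 2) (b - b'') (d'' - d) hU2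
    (mul_left_cancel₀ hUne c6) (by linarith) (by linarith)
  obtain ⟨k4a, k4b⟩ := k4
  obtain ⟨k3a, k3b⟩ := k3
  obtain ⟨k1a, k1b⟩ := k1
  obtain ⟨k2a, k2b⟩ := k2
  obtain ⟨k5a, k5b⟩ := k5
  obtain ⟨k6a, k6b⟩ := k6
  have hb : b = b' := by linarith
  have hb' : b' = b'' := by linarith
  have hc : c = c' := by linarith
  have hc' : c' = c'' := by linarith
  have hd : d = d' := by linarith
  have hd' : d' = d'' := by linarith
  exact ⟨⟨by linarith, by linarith⟩, ⟨by rw [hb], by rw [hb']⟩,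
    ⟨by rw [hc], by rw [hc']⟩, ⟨by rw [hd], by rw [hd']⟩⟩
end

section
/- For all positive integers d and b there exist constants C > 0 and c > 0 with the following property. Let U and V be finite sets with |U| + |V| = n ≥ 2, let p : U → ℝ^d assign a point to each element of U, and let R assign to each v ∈ V a subset of ℝ^d that is a union of at most b axis-aligned boxes (products of d intervals). Then the bipartite graph G on U ⊔ V with edge set E = {(u,v) : p(u) ∈ R(v)} admits a biclique cover of size at most C·n·(log n)^c in which, moreover, each u ∈ U belongs to at most C·(log n)^c of the sets Aᵢ and each v ∈ V belongs to at most C·(log n)^c of the sets Bᵢ. -/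
namespace BCC

/-- Dyadic block of ranks at level `j`, index `k`, within `[0,N)`. -/
def Dy (N j k : ℕ) : Set ℕ := {t | t < N ∧ t / 2 ^ j = k}

/-- `T` is a contiguous set of ranks within `[0,N)`. -/
def Contig (N : ℕ) (T : Set ℕ) : Prop :=
  (∀ t ∈ T, t < N) ∧ ∀ a b t, a ∈ T → b ∈ T → a ≤ t → t ≤ b → t ∈ T

def levP (N : ℕ) (T : Set ℕ) (t : ℕ) : ℕ → Prop := fun j => Dy N j (t / 2 ^ j) ⊆ T

noncomputable def levInst (N : ℕ) (T : Set ℕ) (t : ℕ) : DecidablePred (levP N T t) :=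
  fun _ => Classical.propDecidable _

/-- Largest level `j ≤ L` such that the dyadic block of `t` at level `j` is inside `T`. -/
noncomputable def lev (N L : ℕ) (T : Set ℕ) (t : ℕ) : ℕ :=
  @Nat.findGreatest (levP N T t) (levInst N T t) L

/-- The canonical dyadic blocks used to cover `T`. -/
def usedK (N L : ℕ) (T : Set ℕ) : Set (ℕ × ℕ) :=
  {q | ∃ t ∈ T, q = (lev N L T t, t / 2 ^ lev N L T t)}

lemma lev_le (N L : ℕ) (T : Set ℕ) (t : ℕ) : lev N L T t ≤ L :=
  by
  letI := levInst N T t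
  exact Nat.findGreatest_le L

lemma lev_spec (N L : ℕ) (T : Set ℕ) {t : ℕ} (ht : t ∈ T) :
    Dy N (lev N L T t) (t / 2 ^ lev N L T t) ⊆ T := by
  have h0 : levP N T t 0 := by
    intro x hx
    obtain ⟨hx1, hx2⟩ := hx
    simp only [pow_zero, Nat.div_one] at hx2
    rwa [hx2]
  letI := levInst N T t
  exact Nat.findGreatest_spec (Nat.zero_le L) h0

lemma lev_max (N L : ℕ) (T : Set ℕ) (t : ℕ) {j : ℕ} (h1 : lev N L T t < j) (h2 : j ≤ L) :
    ¬ Dy N j (t / 2 ^ j) ⊆ T :=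
  by
  letI := levInst N T t
  exact Nat.findGreatest_is_greatest h1 h2

lemma usedK_sub (N L : ℕ) (T : Set ℕ) {j k : ℕ} (h : (j, k) ∈ usedK N L T) :
    Dy N j k ⊆ T := by
  obtain ⟨t, ht, heq⟩ := h
  obtain ⟨h1, h2⟩ := Prod.mk.injEq .. ▸ heq
  subst h1; subst h2
  exact lev_spec N L T ht

lemma usedK_mem (N L : ℕ) (T : Set ℕ) (hT : Contig N T) {t : ℕ} (ht : t ∈ T) :
    ∃ j k, (j, k) ∈ usedK N L T ∧ t ∈ Dy N j k :=
  ⟨_, _, ⟨t, ht, rfl⟩, hT.1 t ht, rfl⟩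

lemma usedK_j_le (N L : ℕ) (T : Set ℕ) {j k : ℕ} (h : (j, k) ∈ usedK N L T) : j ≤ L := by
  obtain ⟨t, ht, heq⟩ := h
  obtain ⟨h1, h2⟩ := Prod.mk.injEq .. ▸ heq
  exact h1 ▸ lev_le N L T t

lemma usedK_k_lt (N L : ℕ) (T : Set ℕ) (hT : Contig N T) {j k : ℕ}
    (h : (j, k) ∈ usedK N L T) : k < N := by
  obtain ⟨t, ht, heq⟩ := h
  obtain ⟨h1, h2⟩ := Prod.mk.injEq .. ▸ heq
  subst h2
  exact lt_of_le_of_lt (Nat.div_le_self _ _) (hT.1 t ht)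

lemma chain3 {N L : ℕ} (hNL : N ≤ 2 ^ L) {T : Set ℕ} (hT : Contig N T)
    {j k1 k2 k3 : ℕ} (h1 : (j, k1) ∈ usedK N L T) (h2 : (j, k2) ∈ usedK N L T)
    (h3 : (j, k3) ∈ usedK N L T) (h12 : k1 < k2) (h23 : k2 < k3) : False := by
  have hD1 : Dy N j k1 ⊆ T := usedK_sub N L T h1
  have hD3 : Dy N j k3 ⊆ T := usedK_sub N L T h3
  obtain ⟨t1, ht1, he1⟩ := h1
  obtain ⟨t2, ht2, he2⟩ := h2
  obtain ⟨t3, ht3, he3⟩ := h3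
  obtain ⟨hj1, hk1⟩ := Prod.mk.injEq .. ▸ he1
  obtain ⟨hj2, hk2⟩ := Prod.mk.injEq .. ▸ he2
  obtain ⟨hj3, hk3⟩ := Prod.mk.injEq .. ▸ he3
  rw [← hj1] at hk1
  rw [← hj2] at hk2
  rw [← hj3] at hk3
  have hq : (0:ℕ) < 2 ^ j := pow_pos (by norm_num) j
  have ht1N : t1 < N := hT.1 t1 ht1
  have ht2N : t2 < N := hT.1 t2 ht2
  have ht3N : t3 < N := hT.1 t3 ht3
  -- j < L
  have hjL : j < L := by
    rcases lt_or_eq_of_le (hj2 ▸ lev_le N L T t2 : j ≤ L) with h | h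
    · exact h
    · exfalso
      have h0 : t2 / 2 ^ j = 0 := Nat.div_eq_of_lt (lt_of_lt_of_le ht2N (h ▸ hNL))
      omega
  -- maximality at t2
  have hmax : ¬ Dy N (j+1) (t2 / 2 ^ (j+1)) ⊆ T :=
    lev_max N L T t2 (by omega) (by omega)
  apply hmax
  intro t' h'
  obtain ⟨ht'N, ht'div⟩ := h'
  have hdd : ∀ x : ℕ, x / 2 ^ (j+1) = x / 2 ^ j / 2 := by
    intro x
    rw [pow_succ, ← Nat.div_div_eq_div_mul]
  rw [hdd, hdd] at ht'div
  -- bounds on k' := t' / 2 ^ j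
  set k' := t' / 2 ^ j with hk'
  have hk2' : k' / 2 = k2 / 2 := by rw [ht'div, ← hk2]
  have hbounds : k2 - 1 ≤ k' ∧ k' ≤ k2 + 1 := by omega
  have hk'le : k' * 2 ^ j ≤ t' := by rw [hk']; exact Nat.div_mul_le_self t' _
  have ht'lt : t' < (k' + 1) * 2 ^ j := by
    rw [mul_comm]
    exact Nat.lt_mul_div_succ t' hq
  have hk1t1 : k1 * 2 ^ j ≤ t1 := by rw [hk1]; exact Nat.div_mul_le_self t1 _
  have hk3t3 : k3 * 2 ^ j ≤ t3 := by rw [hk3]; exact Nat.div_mul_le_self t3 _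
  rcases eq_or_lt_of_le (show k' + 1 ≤ k3 + 1 by omega) with hcase | hcase
  · -- k' = k3
    exact hD3 ⟨ht'N, by omega⟩
  · -- k' < k3
    have ha : k1 * 2 ^ j ∈ T := by
      apply hD1
      constructor
      · exact lt_of_le_of_lt hk1t1 ht1N
      · exact Nat.mul_div_cancel _ hq
    have hk1k' : k1 ≤ k' := by omega
    have hat' : k1 * 2 ^ j ≤ t' :=
      le_trans (Nat.mul_le_mul_right _ hk1k') hk'le
    have ht't3 : t' ≤ t3 := by
      have h1 : (k' + 1) * 2 ^ j ≤ k3 * 2 ^ j := Nat.mul_le_mul_right _ (by omega)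
      omega
    exact hT.2 _ _ _ ha ht3 hat' ht't3

end BCC

namespace BCC

lemma ncard_usedK_le {N L : ℕ} (hNL : N ≤ 2 ^ L) {T : Set ℕ} (hT : Contig N T) :
    (usedK N L T).ncard ≤ 2 * (L + 1) := by
  classical
  set S := usedK N L T with hS
  set f : ℕ × ℕ → ℕ × Bool := fun q => (q.1, decide (q.2 = sInf {k | (q.1, k) ∈ S})) with hf
  have hmaps : ∀ q ∈ S, f q ∈
      ((Finset.Iic L ×ˢ (Finset.univ : Finset Bool) : Finset (ℕ × Bool)) : Set (ℕ × Bool)) := by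
    rintro ⟨j, k⟩ hq
    simp only [hf, Finset.coe_product, Set.mem_prod, Finset.mem_coe, Finset.mem_Iic,
      Finset.mem_univ, and_true]
    exact usedK_j_le N L T hq
  have hinj : Set.InjOn f S := by
    rintro ⟨j1, k1⟩ h1 ⟨j2, k2⟩ h2 hfe
    obtain ⟨hj, hbool⟩ := Prod.mk.injEq .. ▸ hfe
    subst hj
    simp only [decide_eq_decide] at hbool
    by_cases hc : k1 = sInf {k | (j1, k) ∈ S}
    · rw [Prod.mk.injEq]
      exact ⟨rfl, by rw [hc, hbool.mp hc]⟩
    · have hc2 : k2 ≠ sInf {k | (j1, k) ∈ S} := fun h => hc (hbool.mpr h)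
      have hne : {k | (j1, k) ∈ S}.Nonempty := ⟨k1, h1⟩
      have hinf : (j1, sInf {k | (j1, k) ∈ S}) ∈ S := Nat.sInf_mem hne
      have hle1 : sInf {k | (j1, k) ∈ S} < k1 :=
        lt_of_le_of_ne (Nat.sInf_le h1) (Ne.symm hc)
      have hle2 : sInf {k | (j1, k) ∈ S} < k2 :=
        lt_of_le_of_ne (Nat.sInf_le h2) (Ne.symm hc2)
      rw [Prod.mk.injEq]
      refine ⟨rfl, ?_⟩
      by_contra hnek
      rcases lt_or_gt_of_ne hnek with h | h
      · exact chain3 hNL hT hinf h1 h2 hle1 h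
      · exact chain3 hNL hT hinf h2 h1 hle2 h
  have := Set.ncard_le_ncard_of_injOn f hmaps hinj (Finset.finite_toSet _)
  rwa [Set.ncard_coe_finset, Finset.card_product, Nat.card_Iic,
    Finset.card_univ, Fintype.card_bool, Nat.mul_comm] at this

end BCC

namespace BCC

lemma exists_rank {U : Type} [Fintype U] (f : U → ℝ) :
    ∃ r : U → ℕ, (∀ u, r u < Fintype.card U) ∧ Function.Injective r ∧
      (∀ u w, r u ≤ r w → f u ≤ f w) ∧
      (∀ t, t < Fintype.card U → ∃ u, r u = t) := by
  classical
  obtain ⟨e⟩ := Fintype.truncEquivFin U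
  set key : U → ℝ ×ₗ ℕ := fun u => toLex (f u, (e u : ℕ)) with hkey
  have hkeyinj : Function.Injective key := by
    intro u w h
    have h2 := congrArg (fun q => (ofLex q).2) h
    simp only [hkey, ofLex_toLex] at h2
    exact e.injective (Fin.val_injective h2)
  set r : U → ℕ := fun u => (Finset.univ.filter (fun w => key w < key u)).card with hr
  have hmono : ∀ u w, key u < key w → r u < r w := by
    intro u w h
    apply Finset.card_lt_card
    constructor
    · intro x hx
      simp only [Finset.mem_filter, Finset.mem_univ, true_and] at hx ⊢
      exact lt_trans hx h
    · intro hsub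
      have := hsub (Finset.mem_filter.mpr ⟨Finset.mem_univ u, h⟩)
      simp only [Finset.mem_filter] at this
      exact lt_irrefl _ this.2
  have hrinj : Function.Injective r := by
    intro u w h
    by_contra hne
    rcases lt_or_gt_of_ne (fun hk => hne (hkeyinj hk)) with hlt | hlt
    · exact absurd h (Nat.ne_of_lt (hmono _ _ hlt))
    · exact absurd h.symm (Nat.ne_of_lt (hmono _ _ hlt))
  have hrlt : ∀ u, r u < Fintype.card U := by
    intro u
    have : (Finset.univ.filter (fun w => key w < key u)) ⊂ Finset.univ := by
      rw [Finset.ssubset_univ_iff]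
      intro hcontr
      have := hcontr ▸ Finset.mem_univ u
      simp only [Finset.mem_filter] at this
      exact lt_irrefl _ this.2
    simpa [Finset.card_univ] using Finset.card_lt_card this
  refine ⟨r, hrlt, hrinj, ?_, ?_⟩
  · intro u w h
    by_contra hcon
    push_neg at hcon
    have hkuw : key w < key u := by
      rw [hkey, Prod.Lex.lt_iff]
      exact Or.inl hcon
    exact absurd h (not_le.mpr (hmono _ _ hkuw))
  · intro t ht
    set r' : U → Fin (Fintype.card U) := fun u => ⟨r u, hrlt u⟩ with hr'
    have hbij : Function.Bijective r' := by
      rw [Fintype.bijective_iff_injective_and_card]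
      exact ⟨fun u w h => hrinj (congrArg Fin.val h), by simp⟩
    obtain ⟨u, hu⟩ := hbij.2 ⟨t, ht⟩
    exact ⟨u, congrArg Fin.val hu⟩

end BCC

namespace BCC

lemma mem_Dy {N j k t : ℕ} : t ∈ Dy N j k ↔ t < N ∧ t / 2 ^ j = k := Iff.rfl

lemma contig_intro {N : ℕ} {T : Set ℕ} (h1 : ∀ t ∈ T, t < N)
    (h2 : ∀ a b t, a ∈ T → b ∈ T → a ≤ t → t ≤ b → t ∈ T) : Contig N T := ⟨h1, h2⟩

lemma mem_usedK_of (N L : ℕ) (T : Set ℕ) {t : ℕ} (ht : t ∈ T) :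
    (lev N L T t, t / 2 ^ lev N L T t) ∈ usedK N L T := ⟨t, ht, rfl⟩

lemma usedK_finite {N L : ℕ} (T : Set ℕ) (hT : Contig N T) : (usedK N L T).Finite := by
  apply Set.Finite.subset ((Set.finite_Iic L).prod (Set.finite_Iio N))
  rintro ⟨j, k⟩ h
  exact ⟨Set.mem_Iic.mpr (usedK_j_le N L T h), Set.mem_Iio.mpr (usedK_k_lt N L T hT h)⟩

end BCC

/-- A set in `ℝ^d` is an axis-aligned box if it is a product of `d` intervals
(an interval being an order-connected subset of `ℝ`). -/
def IsAxisBox (d : ℕ) (s : Set (Fin d → ℝ)) : Prop :=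
  ∃ I : Fin d → Set ℝ, (∀ m, (I m).OrdConnected) ∧ s = Set.univ.pi I

open BCC in
set_option maxHeartbeats 1000000 in
theorem stmt3 (d b : ℕ) (hd : 0 < d) (hb : 0 < b) :
    ∃ C c : ℝ, 0 < C ∧ 0 < c ∧
      ∀ (U V : Type) [Fintype U] [Fintype V]
        (p : U → Fin d → ℝ) (R : V → Set (Fin d → ℝ)),
        (∀ v : V, ∃ Bx : Fin b → Set (Fin d → ℝ),
            (∀ j, IsAxisBox d (Bx j)) ∧ R v = ⋃ j, Bx j) →
        ∀ n : ℕ, n = Fintype.card U + Fintype.card V → 2 ≤ n →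
          ∃ (s : ℕ) (A : Fin s → Finset U) (B : Fin s → Finset V),
            (∀ u v, p u ∈ R v ↔ ∃ i, u ∈ A i ∧ v ∈ B i) ∧
            ((∑ i, ((A i).card + (B i).card) : ℕ) : ℝ) ≤
                C * (n : ℝ) * Real.log (n : ℝ) ^ c ∧
            (∀ u : U, ({i : Fin s | u ∈ A i}.ncard : ℝ) ≤ C * Real.log (n : ℝ) ^ c) ∧
            (∀ v : V, ({i : Fin s | v ∈ B i}.ncard : ℝ) ≤ C * Real.log (n : ℝ) ^ c) := by
  classical
  have hlog2 : (0:ℝ) < Real.log 2 := Real.log_pos one_lt_two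
  set K0 : ℝ := 3 / Real.log 2 with hK0
  have hK0pos : 0 < K0 := by positivity
  refine ⟨((b:ℝ)+1) * (2*K0)^d, (d:ℝ), by positivity, by exact_mod_cast hd, ?_⟩
  intro U V _ _ p R hR n hn hn2
  have hn1 : (1:ℝ) < (n:ℝ) := by exact_mod_cast hn2.trans_lt' one_lt_two
  have hlogn : (0:ℝ) < Real.log n := Real.log_pos hn1
  have hlognn : (0:ℝ) ≤ Real.log n := le_of_lt hlogn
  have hrpow : Real.log (n:ℝ) ^ ((d:ℕ):ℝ) = Real.log (n:ℝ) ^ d := Real.rpow_natCast _ d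
  rw [hrpow]
  have hCd0 : (0:ℝ) ≤ ((b:ℝ)+1) * (2*K0)^d * Real.log (n:ℝ) ^ d := by positivity
  obtain ⟨N, hN⟩ : ∃ N, N = Fintype.card U := ⟨_, rfl⟩
  by_cases hN0 : N = 0
  · haveI : IsEmpty U := Fintype.card_eq_zero_iff.mp (by omega)
    refine ⟨0, (Fin.elim0 : Fin 0 → Finset U), (Fin.elim0 : Fin 0 → Finset V), fun u v => isEmptyElim u, ?_, fun u => isEmptyElim u, ?_⟩
    · simp only [Finset.univ_eq_empty, Finset.sum_empty, Nat.cast_zero]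
      calc (0:ℝ) ≤ ((b:ℝ)+1) * (2*K0)^d * Real.log (n:ℝ) ^ d := hCd0
        _ ≤ _ := by
          rw [mul_comm (((b:ℝ)+1) * (2*K0)^d) (n:ℝ), mul_assoc] at *
          nlinarith [hCd0]
    · intro v
      have h0 : ∀ S : Set (Fin 0), S.ncard = 0 := fun S => by
        simp [Set.eq_empty_of_isEmpty S]
      rw [h0]
      simpa using hCd0
  -- main case
  have hNpos : 0 < N := Nat.pos_of_ne_zero hN0
  have hNn : N ≤ n := by omega
  obtain ⟨L, hL⟩ : ∃ L, L = Nat.log2 n + 1 := ⟨_, rfl⟩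
  have hNL : N ≤ 2 ^ L := by
    rw [hL]
    exact le_of_lt (lt_of_le_of_lt hNn Nat.lt_log2_self)
  -- ranks
  choose r hrlt0 hrinj hrmono hrsurj0 using fun m : Fin d => exists_rank (fun u : U => p u m)
  have hrlt : ∀ (m : Fin d) (u : U), r m u < N := by rw [hN]; exact hrlt0
  have hrsurj : ∀ (m : Fin d), ∀ t < N, ∃ u, r m u = t := by rw [hN]; exact hrsurj0
  -- boxes
  choose Bx hBx hRU using hR
  choose I hIoc hIeq using fun v jb => hBx v jb
  -- rank sets
  set T : V → Fin b → Fin d → Set ℕ :=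
    fun v jb m => {t | ∃ u, r m u = t ∧ p u m ∈ I v jb m} with hT
  have hTc : ∀ v jb m, Contig N (T v jb m) := by
    intro v jb m
    apply contig_intro
    · rintro t ⟨u, hu, -⟩
      rw [← hu]
      exact hrlt m u
    · rintro a c t ⟨u1, hu1, hp1⟩ ⟨u2, hu2, hp2⟩ hat hta
      have hcN : c < N := by rw [← hu2]; exact hrlt m u2
      obtain ⟨u, hu⟩ := hrsurj m t (lt_of_le_of_lt hta hcN)
      have h1 : p u1 m ≤ p u m := hrmono m u1 u (by rw [hu1, hu]; exact hat)
      have h2 : p u m ≤ p u2 m := hrmono m u u2 (by rw [hu, hu2]; exact hta)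
      exact ⟨u, hu, (hIoc v jb m).out hp1 hp2 ⟨h1, h2⟩⟩
  -- index machinery
  set ι := (Fin d → Fin (L+1) × Fin N) with hι
  haveI instF : Fintype ι := inferInstanceAs (Fintype (Fin d → Fin (L+1) × Fin N))
  haveI instD : DecidableEq ι := inferInstanceAs (DecidableEq (Fin d → Fin (L+1) × Fin N))
  haveI instNE : Nonempty ι := ⟨fun _ => (⟨0, Nat.succ_pos L⟩, ⟨0, hNpos⟩)⟩
  set eqv : Fin (Fintype.card ι) ≃ ι := (Fintype.equivFin ι).symm with heqv
  set A' : ι → Finset U := fun w =>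
    Finset.univ.filter (fun u => ∀ m, r m u / 2 ^ ((w m).1 : ℕ) = ((w m).2 : ℕ)) with hA'
  set B' : ι → Finset V := fun w =>
    Finset.univ.filter (fun v => ∃ jb, ∀ m,
      (((w m).1 : ℕ), ((w m).2 : ℕ)) ∈ usedK N L (T v jb m)) with hB'
  set MA : U → Finset ι := fun u => Finset.univ.filter (fun w : ι => u ∈ A' w) with hMA
  set MB : V → Finset ι := fun v => Finset.univ.filter (fun w : ι => v ∈ B' w) with hMB
  -- per-u multiplicity (over ι)
  have hcoordA : ∀ (u : U) (m : Fin d), (Finset.univ.filter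
      (fun q : Fin (L+1) × Fin N => r m u / 2 ^ (q.1:ℕ) = (q.2:ℕ))).card ≤ L+1 := by
    intro u m
    have hle : (Finset.univ.filter
        (fun q : Fin (L+1) × Fin N => r m u / 2 ^ (q.1:ℕ) = (q.2:ℕ))).card ≤
        (Finset.univ : Finset (Fin (L+1))).card := by
      apply Finset.card_le_card_of_injOn (fun q => q.1) (fun q _ => Finset.mem_univ q.1)
      intro q hq q' hq' h
      have h1 : q.1 = q'.1 := h
      simp only [Finset.mem_coe, Finset.mem_filter] at hq hq'
      have h2 : (q.2 : ℕ) = (q'.2 : ℕ) := by rw [← hq.2, ← hq'.2, h1]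
      exact Prod.ext h1 (Fin.val_injective h2)
    simpa using hle
  have hAmult : ∀ u, (MA u).card ≤ (L+1)^d := by
    intro u
    have hsub : MA u ⊆ Fintype.piFinset (fun m => Finset.univ.filter
        (fun q : Fin (L+1) × Fin N => r m u / 2 ^ (q.1 : ℕ) = (q.2 : ℕ))) := by
      intro w hw
      simp only [hMA, hA', Finset.mem_filter, Finset.mem_univ, true_and] at hw
      exact Fintype.mem_piFinset.mpr
        (fun m => Finset.mem_filter.mpr ⟨Finset.mem_univ _, hw m⟩)
    calc (MA u).card ≤ _ := Finset.card_le_card hsub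
      _ = ∏ m : Fin d, (Finset.univ.filter
            (fun q : Fin (L+1) × Fin N => r m u / 2 ^ (q.1 : ℕ) = (q.2 : ℕ))).card :=
          Fintype.card_piFinset _
      _ ≤ ∏ _m : Fin d, (L+1) := Finset.prod_le_prod' (fun m _ => hcoordA u m)
      _ = (L+1)^d := by simp
  have hused_card : ∀ v jb m, (Finset.univ.filter (fun q : Fin (L+1) × Fin N =>
      ((q.1:ℕ), (q.2:ℕ)) ∈ usedK N L (T v jb m))).card ≤ 2*(L+1) := by
    intro v jb m
    have hfin : (usedK N L (T v jb m)).Finite := usedK_finite _ (hTc v jb m)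
    have h1 : ((Finset.univ.filter (fun q : Fin (L+1) × Fin N =>
        ((q.1:ℕ), (q.2:ℕ)) ∈ usedK N L (T v jb m))) : Set (Fin (L+1) × Fin N)).ncard ≤
        (usedK N L (T v jb m)).ncard := by
      refine Set.ncard_le_ncard_of_injOn (fun q => ((q.1:ℕ), (q.2:ℕ))) ?_ ?_ hfin
      · intro q hq
        simp only [Finset.coe_filter, Set.mem_setOf_eq] at hq
        exact hq.2
      · intro q _ q' _ h
        obtain ⟨h1', h2'⟩ := Prod.mk.injEq .. ▸ h
        exact Prod.ext (Fin.val_injective h1') (Fin.val_injective h2')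
    rw [Set.ncard_coe_finset] at h1
    exact h1.trans (ncard_usedK_le hNL (hTc v jb m))
  have hBmult : ∀ v, (MB v).card ≤ b * (2*(L+1))^d := by
    intro v
    have hsub : MB v ⊆
        Finset.univ.biUnion (fun jb : Fin b => Fintype.piFinset (fun m =>
          Finset.univ.filter (fun q : Fin (L+1) × Fin N =>
            ((q.1:ℕ), (q.2:ℕ)) ∈ usedK N L (T v jb m)))) := by
      intro w hw
      simp only [hMB, hB', Finset.mem_filter, Finset.mem_univ, true_and] at hw
      obtain ⟨jb, h⟩ := hw
      exact Finset.mem_biUnion.mpr ⟨jb, Finset.mem_univ _,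
        Fintype.mem_piFinset.mpr (fun m => Finset.mem_filter.mpr ⟨Finset.mem_univ _, h m⟩)⟩
    calc (MB v).card ≤ _ := Finset.card_le_card hsub
      _ ≤ ∑ jb : Fin b, (Fintype.piFinset (fun m =>
            Finset.univ.filter (fun q : Fin (L+1) × Fin N =>
              ((q.1:ℕ), (q.2:ℕ)) ∈ usedK N L (T v jb m)))).card :=
          Finset.card_biUnion_le
      _ ≤ ∑ _jb : Fin b, (2*(L+1))^d := by
          refine Finset.sum_le_sum fun jb _ => ?_
          rw [Fintype.card_piFinset]
          calc ∏ m : Fin d, (Finset.univ.filter (fun q : Fin (L+1) × Fin N =>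
                ((q.1:ℕ), (q.2:ℕ)) ∈ usedK N L (T v jb m))).card
              ≤ ∏ _m : Fin d, (2*(L+1)) :=
                Finset.prod_le_prod' (fun m _ => hused_card v jb m)
            _ = (2*(L+1))^d := by simp
      _ = b * (2*(L+1))^d := by simp [Finset.sum_const, Finset.card_univ]
  -- real log bounds
  have hLreal : ((L:ℝ)+1) ≤ K0 * Real.log n := by
    have h1 : 1 ≤ Nat.log2 n := (Nat.le_log2 (by omega)).mpr (by simpa using hn2)
    have h2 : (2:ℝ) ^ (Nat.log2 n) ≤ (n:ℝ) := by
      exact_mod_cast Nat.log2_self_le (by omega : n ≠ 0)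
    have h3 : (Nat.log2 n : ℝ) * Real.log 2 ≤ Real.log n := by
      rw [← Real.log_pow]
      exact Real.log_le_log (by positivity) h2
    have h4 : ((L:ℝ)+1) ≤ 3 * (Nat.log2 n : ℝ) := by
      rw [hL]
      push_cast
      have : (1:ℝ) ≤ (Nat.log2 n : ℝ) := by exact_mod_cast h1
      linarith
    calc ((L:ℝ)+1) ≤ 3 * (Nat.log2 n:ℝ) := h4
      _ ≤ 3 * (Real.log n / Real.log 2) := by
          have := (le_div_iff₀ hlog2).mpr h3
          linarith
      _ = K0 * Real.log n := by rw [hK0]; ring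
  have hLnn : (0:ℝ) ≤ (L:ℝ)+1 := by positivity
  have hpow1 : (((L+1)^d : ℕ) : ℝ) ≤ K0^d * Real.log n ^ d := by
    push_cast
    calc ((L:ℝ)+1)^d ≤ (K0 * Real.log n)^d := pow_le_pow_left₀ hLnn hLreal d
      _ = K0^d * Real.log n ^ d := mul_pow _ _ _
  have h2dge : (1:ℝ) ≤ 2^d := by
    calc (1:ℝ) = 1^d := (one_pow d).symm
      _ ≤ 2^d := pow_le_pow_left₀ (by norm_num) (by norm_num) d
  have hbge : (1:ℝ) ≤ (b:ℝ)+1 := by linarith [Nat.cast_nonneg (α:=ℝ) b]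
  have hCeq : ((b:ℝ)+1) * (2*K0)^d = ((b:ℝ)+1) * 2^d * K0^d := by rw [mul_pow]; ring
  have hPnn : (0:ℝ) ≤ K0^d * Real.log n ^ d := by positivity
  have hpow2 : ((b * (2*(L+1))^d : ℕ) : ℝ) ≤ (b:ℝ) * 2^d * (K0^d * Real.log n ^ d) := by
    push_cast
    have hstep : (2*((L:ℝ)+1))^d ≤ (2*(K0 * Real.log n))^d := by
      apply pow_le_pow_left₀ (by positivity)
      linarith
    calc (b:ℝ) * (2*((L:ℝ)+1))^d ≤ (b:ℝ) * (2*(K0 * Real.log n))^d :=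
          mul_le_mul_of_nonneg_left hstep (by positivity)
      _ = (b:ℝ) * 2^d * (K0^d * Real.log n ^ d) := by rw [mul_pow, mul_pow]; ring
  -- the cover
  refine ⟨Fintype.card ι, fun i => A' (eqv i), fun i => B' (eqv i), ?_, ?_, ?_, ?_⟩
  · -- correctness
    intro u v
    constructor
    · intro hpu
      rw [hRU v] at hpu
      obtain ⟨jb, hjb⟩ := Set.mem_iUnion.mp hpu
      rw [hIeq v jb] at hjb
      have hcoord : ∀ m, r m u ∈ T v jb m := fun m => ⟨u, rfl, Set.mem_univ_pi.mp hjb m⟩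
      refine ⟨eqv.symm (fun m =>
        (⟨lev N L (T v jb m) (r m u), Nat.lt_succ_of_le (lev_le N L (T v jb m) (r m u))⟩,
         ⟨r m u / 2 ^ lev N L (T v jb m) (r m u),
          lt_of_le_of_lt (Nat.div_le_self _ _) (hrlt m u)⟩)), ?_, ?_⟩
      · simp only [Equiv.apply_symm_apply]
        simp only [hA', Finset.mem_filter, Finset.mem_univ, true_and]
        intro m
        simp
      · simp only [Equiv.apply_symm_apply]
        simp only [hB', Finset.mem_filter, Finset.mem_univ, true_and]
        exact ⟨jb, fun m => mem_usedK_of N L (T v jb m) (hcoord m)⟩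
    · rintro ⟨i, hA, hB⟩
      simp only [hA', Finset.mem_filter, Finset.mem_univ, true_and] at hA
      simp only [hB', Finset.mem_filter, Finset.mem_univ, true_and] at hB
      obtain ⟨jb, hused⟩ := hB
      rw [hRU v]
      refine Set.mem_iUnion.mpr ⟨jb, ?_⟩
      rw [hIeq v jb]
      refine Set.mem_univ_pi.mpr (fun m => ?_)
      have hmem : r m u ∈ Dy N ((eqv i m).1 : ℕ) ((eqv i m).2 : ℕ) :=
        mem_Dy.mpr ⟨hrlt m u, hA m⟩
      obtain ⟨u', hu', hpu'⟩ := usedK_sub N L (T v jb m) (hused m) hmem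
      rwa [hrinj m hu'] at hpu'
  · -- total size
    have hdoubleA : ∑ w : ι, (A' w).card = ∑ u : U, (MA u).card := by
      calc ∑ w : ι, (A' w).card = ∑ w : ι, ∑ x : U, if x ∈ A' w then 1 else 0 := by
            refine Finset.sum_congr rfl fun w _ => ?_
            conv_lhs => rw [← Finset.filter_univ_mem (A' w)]
            rw [Finset.card_filter]
        _ = ∑ x : U, ∑ w : ι, if x ∈ A' w then 1 else 0 := Finset.sum_comm
        _ = ∑ x : U, (MA x).card := by
            refine Finset.sum_congr rfl fun x _ => ?_
            rw [hMA]
            exact (Finset.card_filter _ _).symm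
    have hdoubleB : ∑ w : ι, (B' w).card = ∑ v : V, (MB v).card := by
      calc ∑ w : ι, (B' w).card = ∑ w : ι, ∑ x : V, if x ∈ B' w then 1 else 0 := by
            refine Finset.sum_congr rfl fun w _ => ?_
            conv_lhs => rw [← Finset.filter_univ_mem (B' w)]
            rw [Finset.card_filter]
        _ = ∑ x : V, ∑ w : ι, if x ∈ B' w then 1 else 0 := Finset.sum_comm
        _ = ∑ x : V, (MB x).card := by
            refine Finset.sum_congr rfl fun x _ => ?_
            rw [hMB]
            exact (Finset.card_filter _ _).symm
    have hsum1 : ∑ i : Fin (Fintype.card ι), ((A' (eqv i)).card + (B' (eqv i)).card)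
        = ∑ w : ι, ((A' w).card + (B' w).card) :=
      Equiv.sum_comp eqv (fun w => (A' w).card + (B' w).card)
    have hsum2 : ∑ w : ι, ((A' w).card + (B' w).card) ≤
        N * (L+1)^d + Fintype.card V * (b * (2*(L+1))^d) := by
      rw [Finset.sum_add_distrib, hdoubleA, hdoubleB]
      have hA1 : ∑ u : U, (MA u).card ≤ N * (L+1)^d := by
        calc ∑ u : U, (MA u).card ≤ ∑ _u : U, (L+1)^d :=
              Finset.sum_le_sum (fun u _ => hAmult u)
          _ = N * (L+1)^d := by
              rw [Finset.sum_const, Finset.card_univ, ← hN, smul_eq_mul]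
      have hB1 : ∑ v : V, (MB v).card ≤ Fintype.card V * (b * (2*(L+1))^d) := by
        calc ∑ v : V, (MB v).card ≤ ∑ _v : V, b * (2*(L+1))^d :=
              Finset.sum_le_sum (fun v _ => hBmult v)
          _ = Fintype.card V * (b * (2*(L+1))^d) := by
              rw [Finset.sum_const, Finset.card_univ, smul_eq_mul]
      omega
    have hcast : ((∑ i : Fin (Fintype.card ι),
        ((A' (eqv i)).card + (B' (eqv i)).card) : ℕ) : ℝ) ≤
        (N : ℝ) * (((L+1)^d : ℕ) : ℝ) +
          (Fintype.card V : ℝ) * ((b * (2*(L+1))^d : ℕ) : ℝ) := by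
      rw [hsum1]
      push_cast
      exact_mod_cast hsum2
    have hNr : (N:ℝ) ≤ (n:ℝ) := by exact_mod_cast hNn
    have hVr : ((Fintype.card V : ℕ):ℝ) ≤ (n:ℝ) := by
      have : Fintype.card V ≤ n := by omega
      exact_mod_cast this
    calc ((∑ i : Fin (Fintype.card ι),
          ((A' (eqv i)).card + (B' (eqv i)).card) : ℕ) : ℝ)
        ≤ (N : ℝ) * (((L+1)^d : ℕ) : ℝ) +
            (Fintype.card V : ℝ) * ((b * (2*(L+1))^d : ℕ) : ℝ) := hcast
      _ ≤ (n:ℝ) * (K0^d * Real.log n ^ d) +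
            (n:ℝ) * ((b:ℝ) * 2^d * (K0^d * Real.log n ^ d)) := by
          have t1 := mul_le_mul hNr hpow1 (by positivity) (by positivity)
          have t2 := mul_le_mul hVr hpow2 (by positivity) (by positivity)
          linarith
      _ ≤ ((b:ℝ)+1) * (2*K0)^d * (n:ℝ) * Real.log n ^ d := by
          rw [hCeq]
          have hn0 : (0:ℝ) ≤ (n:ℝ) := by positivity
          nlinarith [hPnn, h2dge, hn0, mul_nonneg hn0 hPnn]
  · -- per-u multiplicity
    intro u
    have hmult : ({i : Fin (Fintype.card ι) | u ∈ A' (eqv i)}).ncard ≤ (MA u).card := by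
      have h := Set.ncard_le_ncard_of_injOn (fun i => eqv i)
        (fun i hi => Finset.mem_coe.mpr (by
          rw [hMA]
          exact Finset.mem_filter.mpr ⟨Finset.mem_univ _, hi⟩))
        (fun i _ i' _ h => eqv.injective h) (Finset.finite_toSet (MA u))
      rwa [Set.ncard_coe_finset] at h
    have h1 : (({i : Fin (Fintype.card ι) | u ∈ A' (eqv i)}).ncard : ℝ) ≤
        (((L+1)^d : ℕ) : ℝ) := by
      exact_mod_cast hmult.trans (hAmult u)
    calc (({i : Fin (Fintype.card ι) | u ∈ A' (eqv i)}).ncard : ℝ)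
        ≤ (((L+1)^d : ℕ) : ℝ) := h1
      _ ≤ K0^d * Real.log n ^ d := hpow1
      _ ≤ ((b:ℝ)+1) * (2*K0)^d * Real.log n ^ d := by
          rw [hCeq]
          nlinarith [hPnn, h2dge, hbge]
  · -- per-v multiplicity
    intro v
    have hmult : ({i : Fin (Fintype.card ι) | v ∈ B' (eqv i)}).ncard ≤ (MB v).card := by
      have h := Set.ncard_le_ncard_of_injOn (fun i => eqv i)
        (fun i hi => Finset.mem_coe.mpr (by
          rw [hMB]
          exact Finset.mem_filter.mpr ⟨Finset.mem_univ _, hi⟩))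
        (fun i _ i' _ h => eqv.injective h) (Finset.finite_toSet (MB v))
      rwa [Set.ncard_coe_finset] at h
    have h1 : (({i : Fin (Fintype.card ι) | v ∈ B' (eqv i)}).ncard : ℝ) ≤
        ((b * (2*(L+1))^d : ℕ) : ℝ) := by
      exact_mod_cast hmult.trans (hBmult v)
    calc (({i : Fin (Fintype.card ι) | v ∈ B' (eqv i)}).ncard : ℝ)
        ≤ ((b * (2*(L+1))^d : ℕ) : ℝ) := h1
      _ ≤ (b:ℝ) * 2^d * (K0^d * Real.log n ^ d) := hpow2
      _ ≤ ((b:ℝ)+1) * (2*K0)^d * Real.log n ^ d := by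
          rw [hCeq]
          nlinarith [hPnn, h2dge, hbge]
end

section
/- Let k ≥ 3 and let G be a simple graph whose vertex set is partitioned into parts V₁, …, V_k (indices taken modulo k, so V_{k+1} = V₁). Suppose that for each ℓ ∈ {1,…,k} there is a finite index set I_ℓ and families (Aᵢ^ℓ)_{i ∈ I_ℓ} of subsets of V_ℓ and (Bᵢ^ℓ)_{i ∈ I_ℓ} of subsets of V_{ℓ+1} such that for all u ∈ V_ℓ and v ∈ V_{ℓ+1}: u and v are adjacent in G if and only if there exists i ∈ I_ℓ with u ∈ Aᵢ^ℓ and v ∈ Bᵢ^ℓ. Then the following are equivalent: (1) there exist v₁ ∈ V₁, …, v_k ∈ V_k such that v_ℓ is adjacent to v_{ℓ+1} in G for every ℓ ∈ {1,…,k} (cyclically, with v_{k+1} = v₁); (2) there exist indices i₁ ∈ I₁, …, i_k ∈ I_k such that B_{i_ℓ}^ℓ ∩ A_{i_{ℓ+1}}^{ℓ+1} ≠ ∅ for every ℓ ∈ {1,…,k} (cyclically, with i_{k+1} = i₁). -/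
theorem stmt6 (k : ℕ) (hk : 3 ≤ k) (V : Type) (G : SimpleGraph V)
    (P : ZMod k → Set V)
    (hcover : ∀ v : V, ∃ ℓ : ZMod k, v ∈ P ℓ)
    (hdisj : ∀ ℓ ℓ' : ZMod k, ℓ ≠ ℓ' → Disjoint (P ℓ) (P ℓ'))
    (I : ZMod k → Type) [∀ ℓ, Fintype (I ℓ)]
    (A B : ∀ ℓ : ZMod k, I ℓ → Set V)
    (hA : ∀ ℓ i, A ℓ i ⊆ P ℓ) (hB : ∀ ℓ i, B ℓ i ⊆ P (ℓ + 1))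
    (hbic : ∀ ℓ : ZMod k, ∀ u ∈ P ℓ, ∀ v ∈ P (ℓ + 1),
      G.Adj u v ↔ ∃ i : I ℓ, u ∈ A ℓ i ∧ v ∈ B ℓ i) :
    (∃ v : ZMod k → V, (∀ ℓ, v ℓ ∈ P ℓ) ∧ ∀ ℓ, G.Adj (v ℓ) (v (ℓ + 1))) ↔
      (∃ i : ∀ ℓ : ZMod k, I ℓ,
        ∀ ℓ, (B ℓ (i ℓ) ∩ A (ℓ + 1) (i (ℓ + 1))).Nonempty) := by
  constructor
  · rintro ⟨v, hv, hadj⟩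
    have h : ∀ ℓ, ∃ i : I ℓ, v ℓ ∈ A ℓ i ∧ v (ℓ + 1) ∈ B ℓ i := fun ℓ =>
      (hbic ℓ (v ℓ) (hv ℓ) (v (ℓ + 1)) (hv (ℓ + 1))).mp (hadj ℓ)
    choose i hi1 hi2 using h
    exact ⟨i, fun ℓ => ⟨v (ℓ + 1), hi2 ℓ, hi1 (ℓ + 1)⟩⟩
  · rintro ⟨i, hi⟩
    choose w hwB hwA using hi
    refine ⟨fun ℓ => w (ℓ - 1), fun ℓ => ?_, fun ℓ => ?_⟩
    · have := hB (ℓ - 1) (i (ℓ - 1)) (hwB (ℓ - 1))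
      have e : ℓ - 1 + 1 = ℓ := by ring
      rwa [e] at this
    · have h1 : w (ℓ - 1) ∈ A ℓ (i ℓ) := by
        have := hwA (ℓ - 1)
        have e : ℓ - 1 + 1 = ℓ := by ring
        rwa [e] at this
      have h2 : w (ℓ + 1 - 1) ∈ B ℓ (i ℓ) := by simpa using hwB ℓ
      have hu : w (ℓ - 1) ∈ P ℓ := hA ℓ (i ℓ) h1
      have hv' : w (ℓ + 1 - 1) ∈ P (ℓ + 1) := hB ℓ (i ℓ) h2
      exact (hbic ℓ _ hu _ hv').mpr ⟨i ℓ, h1, h2⟩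
end

section
/- Fix a dimension d ≥ 1. A quadtree cell is a set of the form ∏_{m=1}^d [ i_m·2^{−j}, (i_m+1)·2^{−j} ) ⊆ ℝ^d for integers i₁,…,i_d and j ∈ ℤ; its side length is 2^{−j}. For a nonempty bounded set s ⊆ ℝ^d, the side length of s is the maximum over m ∈ {1,…,d} of the difference between the supremum and infimum of the m-th coordinates of points of s; for c > 0, s is c-aligned if s is contained in some quadtree cell whose side length is at most c times the side length of s. Let K > d be an odd integer and for j ∈ {1,…,K} let t^{(j)} = (j/K, …, j/K) ∈ ℝ^d. Then for every nonempty set s ⊆ [0,1)^d of positive side length, the number of indices j ∈ {1,…,K} for which the translate s + t^{(j)} is NOT (2K)-aligned is at most d. -/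
/-- The quadtree cell `∏ₘ [iₘ·2^{−j}, (iₘ+1)·2^{−j})` in `ℝ^d`; its side length is `2^{−j}`. -/
def qcell (d : ℕ) (i : Fin d → ℤ) (j : ℤ) : Set (Fin d → ℝ) :=
  {x | ∀ m, (i m : ℝ) * (2 : ℝ) ^ (-j) ≤ x m ∧ x m < ((i m : ℝ) + 1) * (2 : ℝ) ^ (-j)}

/-- The side length of a set `s ⊆ ℝ^d`: the maximum over coordinates `m` of the
difference between the supremum and infimum of the `m`-th coordinates of points of `s`. -/
noncomputable def sideLen (d : ℕ) (s : Set (Fin d → ℝ)) : ℝ :=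
  ⨆ m : Fin d, (sSup ((fun x => x m) '' s) - sInf ((fun x => x m) '' s))

/-- `s` is `c`-aligned: `s` is contained in some quadtree cell whose side length is at
most `c` times the side length of `s`. -/
def IsAligned (d : ℕ) (c : ℝ) (s : Set (Fin d → ℝ)) : Prop :=
  ∃ (i : Fin d → ℤ) (j : ℤ), s ⊆ qcell d i j ∧ (2 : ℝ) ^ (-j) ≤ c * sideLen d s

/-- The shifted interval `(aₘ + j/K, bₘ + j/K]` crosses a multiple of `L`. -/
def Crosses (K : ℕ) (L am bm : ℝ) (j : ℕ) : Prop :=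
  ∃ q : ℤ, am + (j : ℝ) / (K : ℝ) < (q : ℝ) * L ∧ (q : ℝ) * L ≤ bm + (j : ℝ) / (K : ℝ)

lemma sSup_image_add_const (A : Set ℝ) (hA : A.Nonempty) (hb : BddAbove A) (c : ℝ) :
    sSup ((fun y => y + c) '' A) = sSup A + c :=
  (Monotone.map_csSup_of_continuousAt (f := fun y => y + c)
    (by fun_prop) (fun u v h => add_le_add_left h _) hA hb).symm

lemma sInf_image_add_const (A : Set ℝ) (hA : A.Nonempty) (hb : BddBelow A) (c : ℝ) :
    sInf ((fun y => y + c) '' A) = sInf A + c :=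
  (Monotone.map_csInf_of_continuousAt (f := fun y => y + c)
    (by fun_prop) (fun u v h => add_le_add_left h _) hA hb).symm

lemma sideLen_image_add (d : ℕ) (s : Set (Fin d → ℝ)) (hne : s.Nonempty)
    (hbA : ∀ m, BddAbove ((fun x => x m) '' s)) (hbB : ∀ m, BddBelow ((fun x => x m) '' s))
    (t : Fin d → ℝ) :
    sideLen d ((fun x => x + t) '' s) = sideLen d s := by
  unfold sideLen
  refine iSup_congr fun m => ?_
  have himg : (fun x : Fin d → ℝ => x m) '' ((fun x => x + t) '' s)
      = (fun y => y + t m) '' ((fun x : Fin d → ℝ => x m) '' s) := by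
    rw [Set.image_image, Set.image_image]; rfl
  rw [himg, sSup_image_add_const _ (hne.image _) (hbA m),
    sInf_image_add_const _ (hne.image _) (hbB m)]
  ring

theorem stmt8 (d : ℕ) (hd : 1 ≤ d) (K : ℕ) (hKd : d < K) (hodd : Odd K)
    (s : Set (Fin d → ℝ)) (hne : s.Nonempty)
    (hsub : s ⊆ {x | ∀ m, 0 ≤ x m ∧ x m < 1})
    (hpos : 0 < sideLen d s) :
    {j : ℕ | j ∈ Finset.Icc 1 K ∧
        ¬ IsAligned d (2 * (K : ℝ))
            ((fun x => x + fun _ => (j : ℝ) / (K : ℝ)) '' s)}.ncard ≤ d := by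
  classical
  have hKpos : 0 < K := lt_of_le_of_lt (Nat.zero_le d) hKd
  have hKR : (0:ℝ) < K := by exact_mod_cast hKpos
  set a : Fin d → ℝ := fun m => sInf ((fun x => x m) '' s) with ha
  set b : Fin d → ℝ := fun m => sSup ((fun x => x m) '' s) with hb
  have hne' : ∀ m, ((fun x : Fin d → ℝ => x m) '' s).Nonempty := fun m => hne.image _
  have hbA : ∀ m, BddAbove ((fun x : Fin d → ℝ => x m) '' s) := by
    intro m
    refine ⟨1, ?_⟩
    rintro y ⟨x, hx, rfl⟩
    exact le_of_lt (hsub hx m).2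
  have hbB : ∀ m, BddBelow ((fun x : Fin d → ℝ => x m) '' s) := by
    intro m
    refine ⟨0, ?_⟩
    rintro y ⟨x, hx, rfl⟩
    exact (hsub hx m).1
  have ha0 : ∀ m, 0 ≤ a m := fun m => le_csInf (hne' m) (by rintro y ⟨x, hx, rfl⟩; exact (hsub hx m).1)
  have hb1 : ∀ m, b m ≤ 1 := fun m => csSup_le (hne' m) (by rintro y ⟨x, hx, rfl⟩; exact le_of_lt (hsub hx m).2)
  have hax : ∀ m, ∀ x ∈ s, a m ≤ x m := fun m x hx => csInf_le (hbB m) ⟨x, hx, rfl⟩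
  have hxb : ∀ m, ∀ x ∈ s, x m ≤ b m := fun m x hx => le_csSup (hbA m) ⟨x, hx, rfl⟩
  set r := sideLen d s with hr
  have hd' : Nonempty (Fin d) := ⟨⟨0, hd⟩⟩
  have hrs : r = ⨆ m : Fin d, (b m - a m) := rfl
  have hab : ∀ m, b m - a m ≤ r := by
    intro m
    rw [hrs]
    exact le_ciSup (f := fun m : Fin d => b m - a m) (Set.Finite.bddAbove (Set.finite_range _)) m
  have hr1 : r ≤ 1 := by
    rw [hrs]
    exact ciSup_le fun m => by have := ha0 m; have := hb1 m; linarith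
  obtain ⟨n, hn1, hn2⟩ := exists_mem_Ico_zpow (x := (K:ℝ) * r) (by positivity) one_lt_two
  set e : ℤ := n + 1 with he
  set L : ℝ := (2:ℝ) ^ e with hL
  have hLpos : (0:ℝ) < L := by positivity
  have hKrL : (K:ℝ) * r < L := hn2
  have hL2Kr : L ≤ 2 * ((K:ℝ) * r) := by
    rw [hL, he, zpow_add_one₀ (two_ne_zero)]
    nlinarith [hn1]
  -- Step A : non-aligned shifts cross in some coordinate
  have stepA : ∀ j ∈ Finset.Icc 1 K,
      ¬ IsAligned d (2 * (K:ℝ)) ((fun x => x + fun _ => (j : ℝ) / (K : ℝ)) '' s) →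
      ∃ m, Crosses K L (a m) (b m) j := by
    intro j hj hnal
    by_contra hno
    push_neg at hno
    apply hnal
    refine ⟨fun m => ⌊(a m + (j:ℝ)/K)/L⌋, -e, ?_, ?_⟩
    · rintro y ⟨x, hx, rfl⟩ m
      have h2L : (2:ℝ) ^ (-(-e)) = L := by rw [neg_neg]
      have hym : (fun x : Fin d → ℝ => x + fun _ : Fin d => (j : ℝ) / (K : ℝ)) x m = x m + (j:ℝ)/(K:ℝ) := rfl
      rw [hym, h2L]
      set u : ℝ := a m + (j:ℝ)/K with hu
      have hfl : (⌊u/L⌋ : ℝ) * L ≤ u := by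
        have := Int.floor_le (u/L)
        calc (⌊u/L⌋ : ℝ) * L ≤ (u/L) * L := by nlinarith
        _ = u := div_mul_cancel₀ u (ne_of_gt hLpos)
      have hfl2 : u < ((⌊u/L⌋ : ℝ) + 1) * L := by
        have := Int.lt_floor_add_one (u/L)
        calc u = (u/L) * L := (div_mul_cancel₀ u (ne_of_gt hLpos)).symm
        _ < ((⌊u/L⌋ : ℝ) + 1) * L := by nlinarith
      constructor
      · calc (⌊u/L⌋ : ℝ) * L ≤ u := hfl
        _ ≤ x m + (j:ℝ)/K := by have := hax m x hx; rw [hu]; linarith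
      · by_contra hcon
        push_neg at hcon
        exact hno m ⟨⌊u/L⌋ + 1, by push_cast; exact hfl2, by
          push_cast
          have := hxb m x hx
          calc ((⌊u/L⌋ : ℝ) + 1) * L ≤ x m + (j:ℝ)/K := hcon
          _ ≤ b m + (j:ℝ)/K := by linarith⟩
    · have hside : sideLen d ((fun x => x + fun _ => (j : ℝ) / (K : ℝ)) '' s) = r :=
        sideLen_image_add d s hne hbA hbB _
      rw [hside, neg_neg, ← hL]
      calc L ≤ 2 * ((K:ℝ) * r) := hL2Kr
      _ = 2 * (K:ℝ) * r := by ring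
  -- Step B : for each coordinate, at most one shift crosses
  have stepB : ∀ m : Fin d, ∀ j ∈ Finset.Icc 1 K, ∀ j' ∈ Finset.Icc 1 K,
      Crosses K L (a m) (b m) j → Crosses K L (a m) (b m) j' → j = j' := by
    rintro m j hj j' hj' ⟨q, hq1, hq2⟩ ⟨q', hq1', hq2'⟩
    simp only [Finset.mem_Icc] at hj hj'
    have habm : b m - a m ≤ r := hab m
    rcases le_or_gt e 0 with hecase | hecase
    · -- small cells: integrality argument
      set t : ℕ := (-e).toNat with ht
      have htL : (2:ℝ) ^ t * L = 1 := by
        rw [hL, ← zpow_natCast (2:ℝ) t, ht, Int.toNat_of_nonneg (by omega), ← zpow_add₀ (two_ne_zero)]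
        simp
      have hjz : 1 ≤ (j:ℤ) ∧ (j:ℤ) ≤ K := by exact_mod_cast hj
      have hjz' : 1 ≤ (j':ℤ) ∧ (j':ℤ) ≤ K := by exact_mod_cast hj'
      have hA : (q':ℝ)*L - (q:ℝ)*L - ((j':ℝ)/K - (j:ℝ)/K) < r := by linarith
      have hB : -r < (q':ℝ)*L - (q:ℝ)*L - ((j':ℝ)/K - (j:ℝ)/K) := by linarith
      have h2t : (2:ℝ)^t = 1 / L := by
        field_simp
        linarith [htL]
      have hX : (((q' - q) * (K:ℤ) - ((j':ℤ) - (j:ℤ)) * 2 ^ t : ℤ) : ℝ)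
          = ((q':ℝ)*L - (q:ℝ)*L - ((j':ℝ)/K - (j:ℝ)/K)) * ((K:ℝ) / L) := by
        push_cast
        rw [h2t]
        field_simp
      have habs : |(((q' - q) * (K:ℤ) - ((j':ℤ) - (j:ℤ)) * 2 ^ t : ℤ) : ℝ)| < 1 := by
        rw [hX, abs_mul, abs_of_pos (div_pos hKR hLpos)]
        have h1 : |(q':ℝ)*L - (q:ℝ)*L - ((j':ℝ)/K - (j:ℝ)/K)| < r := abs_lt.mpr ⟨hB, hA⟩
        calc |(q':ℝ)*L - (q:ℝ)*L - ((j':ℝ)/K - (j:ℝ)/K)| * ((K:ℝ)/L)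
            < r * ((K:ℝ)/L) := by
              apply mul_lt_mul_of_pos_right h1 (div_pos hKR hLpos)
        _ < 1 := by
              rw [mul_div_assoc']
              rw [div_lt_one hLpos]
              nlinarith [hKrL]
      have hz : ((q' - q) * (K:ℤ) - ((j':ℤ) - (j:ℤ)) * 2 ^ t : ℤ) = 0 := by
        rw [← Int.abs_lt_one_iff]
        exact_mod_cast (by exact_mod_cast habs : |((q' - q) * (K:ℤ) - ((j':ℤ) - (j:ℤ)) * 2 ^ t : ℤ)| < (1:ℤ))
      have hdvd : (K:ℤ) ∣ ((j':ℤ) - (j:ℤ)) * 2 ^ t := ⟨q' - q, by linear_combination -hz⟩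
      have hcop : IsCoprime (K:ℤ) ((2:ℤ) ^ t) := by
        have h2 : Nat.Coprime K (2 ^ t) := (Nat.coprime_two_right.mpr hodd).pow_right t
        have := Nat.isCoprime_iff_coprime.mpr h2
        exact_mod_cast this
      have hdvd2 : (K:ℤ) ∣ ((j':ℤ) - (j:ℤ)) := hcop.dvd_of_dvd_mul_right hdvd
      have hzero : (j':ℤ) - (j:ℤ) = 0 := by
        refine Int.eq_zero_of_abs_lt_dvd hdvd2 ?_
        rw [abs_sub_lt_iff]
        omega
      omega
    · -- big cells: only j = K can cross
      have hL2 : (2:ℝ) ≤ L := by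
        rw [hL]
        calc (2:ℝ) = 2 ^ (1:ℤ) := by norm_num
        _ ≤ 2 ^ e := by
          apply zpow_le_zpow_right₀ one_le_two
          omega
      have key : ∀ jj : ℕ, 1 ≤ jj → jj ≤ K → ∀ qq : ℤ,
          a m + (jj:ℝ)/K < (qq:ℝ) * L → (qq:ℝ) * L ≤ b m + (jj:ℝ)/K → jj = K := by
        intro jj h1 h2 qq hc1 hc2
        have hjjK : (jj:ℝ)/K ≤ 1 := by
          rw [div_le_one hKR]; exact_mod_cast h2
        have hjj0 : (0:ℝ) < (jj:ℝ)/K := by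
          apply div_pos _ hKR
          exact_mod_cast h1
        have hqq0 : 0 < qq := by
          by_contra hcon
          push_neg at hcon
          have : (qq:ℝ) * L ≤ 0 := mul_nonpos_of_nonpos_of_nonneg (by exact_mod_cast hcon) (le_of_lt hLpos)
          have := ha0 m
          linarith
        have hqL : L ≤ (qq:ℝ) * L := le_mul_of_one_le_left (le_of_lt hLpos) (by exact_mod_cast hqq0)
        have hup : b m + (jj:ℝ)/K ≤ 2 := by linarith [hb1 m]
        have heq : (jj:ℝ)/K = 1 := by linarith [hb1 m]
        have : (jj:ℝ) = K := by
          field_simp at heq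
          exact_mod_cast heq
        exact_mod_cast this
      rw [key j hj.1 hj.2 q hq1 hq2, key j' hj'.1 hj'.2 q' hq1' hq2']
  -- Counting
  set S := {j : ℕ | j ∈ Finset.Icc 1 K ∧
      ¬ IsAligned d (2 * (K : ℝ)) ((fun x => x + fun _ => (j : ℝ) / (K : ℝ)) '' s)} with hS
  have hSfin : S.Finite :=
    Set.Finite.subset (Finset.Icc 1 K).finite_toSet (fun j hj => hj.1)
  set φ : ℕ → Fin d := fun j =>
    if h : ∃ m, Crosses K L (a m) (b m) j then h.choose else ⟨0, hd⟩ with hφ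
  have hφS : ∀ j ∈ S, Crosses K L (a (φ j)) (b (φ j)) j := by
    intro j hj
    have h := stepA j hj.1 hj.2
    simp only [hφ, dif_pos h]
    exact h.choose_spec
  have hinj : Set.InjOn φ S := by
    intro j hj j' hj' heq
    refine stepB (φ j) j hj.1 j' hj'.1 (hφS j hj) ?_
    rw [heq]; exact hφS j' hj'
  calc S.ncard = (φ '' S).ncard := (Set.ncard_image_of_injOn hinj).symm
  _ ≤ (Set.univ : Set (Fin d)).ncard := Set.ncard_le_ncard (Set.subset_univ _) Set.finite_univ
  _ = d := by simp [Set.ncard_univ]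
end

section
/- Fix a dimension d ≥ 1 and a constant c ≥ 1. A quadtree cell is a set of the form ∏_{m=1}^d [ i_m·2^{−j}, (i_m+1)·2^{−j} ) ⊆ ℝ^d for integers i₁,…,i_d and j ∈ ℤ; its side length is 2^{−j}. For a nonempty bounded set s ⊆ ℝ^d, the side length of s is the maximum over m ∈ {1,…,d} of the difference between the supremum and infimum of the m-th coordinates of points of s; s is c-aligned if s is contained in some quadtree cell whose side length is at most c times the side length of s. Now let s be a nonempty bounded c-aligned set with positive side length r_s, and let γ be a quadtree cell of side length r. If s intersects γ but s is not contained in γ, then r_s ≥ r/c. -/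
lemma dyadic1 (a b j j' : ℤ) (hj : j ≤ j') (x : ℝ)
    (hx1 : (a:ℝ) * 2^(-j') ≤ x) (hx2 : x < ((a:ℝ)+1) * 2^(-j'))
    (hx3 : (b:ℝ) * 2^(-j) ≤ x) (hx4 : x < ((b:ℝ)+1) * 2^(-j)) :
    (b:ℝ) * 2^(-j) ≤ (a:ℝ) * 2^(-j') ∧ ((a:ℝ)+1) * 2^(-j') ≤ ((b:ℝ)+1) * 2^(-j) := by
  set k : ℕ := (j' - j).toNat with hk
  have hkk : (k : ℤ) = j' - j := Int.toNat_of_nonneg (by omega)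
  have hpow : (2:ℝ)^(-j) = ((2^k : ℤ) : ℝ) * 2^(-j') := by
    push_cast
    rw [← zpow_natCast (2:ℝ) k, hkk, ← zpow_add₀ (by norm_num : (2:ℝ) ≠ 0)]
    ring_nf
  have hp : (0:ℝ) < 2^(-j') := by positivity
  have h1 : b * 2^k ≤ a := by
    have : (b:ℝ) * ((2^k : ℤ) : ℝ) * 2^(-j') < ((a:ℝ)+1) * 2^(-j') := by
      calc (b:ℝ) * ((2^k : ℤ) : ℝ) * 2^(-j') = (b:ℝ) * 2^(-j) := by rw [hpow]; ring
      _ ≤ x := hx3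
      _ < _ := hx2
    have h' : (b:ℝ) * ((2^k : ℤ) : ℝ) < (a:ℝ)+1 := lt_of_mul_lt_mul_right this hp.le
    have : ((b * 2^k : ℤ) : ℝ) < ((a+1 : ℤ) : ℝ) := by push_cast; push_cast at h'; linarith
    exact Int.lt_add_one_iff.mp (by exact_mod_cast this)
  have h2 : a + 1 ≤ (b+1) * 2^k := by
    have : (a:ℝ) * 2^(-j') < ((b:ℝ)+1) * ((2^k : ℤ) : ℝ) * 2^(-j') := by
      calc (a:ℝ) * 2^(-j') ≤ x := hx1
      _ < ((b:ℝ)+1) * 2^(-j) := hx4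
      _ = _ := by rw [hpow]; ring
    have h' : (a:ℝ) < ((b:ℝ)+1) * ((2^k : ℤ) : ℝ) := lt_of_mul_lt_mul_right this hp.le
    have : ((a : ℤ) : ℝ) < (((b+1) * 2^k : ℤ) : ℝ) := by push_cast; push_cast at h'; linarith
    exact Int.add_one_le_iff.mpr (by exact_mod_cast this)
  constructor
  · have : ((b * 2^k : ℤ) : ℝ) ≤ (a:ℤ) := by exact_mod_cast h1
    push_cast at this
    rw [hpow]; push_cast
    nlinarith
  · have : ((a + 1 : ℤ) : ℝ) ≤ (((b+1) * 2^k : ℤ) : ℝ) := by exact_mod_cast h2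
    push_cast at this
    rw [hpow]; push_cast
    nlinarith

lemma qcell_nested (d : ℕ) (i i' : Fin d → ℤ) (j j' : ℤ) (hj : j ≤ j')
    (h : (qcell d i' j' ∩ qcell d i j).Nonempty) : qcell d i' j' ⊆ qcell d i j := by
  obtain ⟨x, hx', hx⟩ := h
  intro y hy m
  obtain ⟨hb1, hb2⟩ := dyadic1 (i' m) (i m) j j' hj (x m) (hx' m).1 (hx' m).2 (hx m).1 (hx m).2
  exact ⟨le_trans hb1 (hy m).1, lt_of_lt_of_le (hy m).2 hb2⟩

theorem stmt10 (d : ℕ) (hd : 1 ≤ d) (c : ℝ) (hc : 1 ≤ c)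
    (s : Set (Fin d → ℝ)) (hne : s.Nonempty) (hbdd : Bornology.IsBounded s)
    (hal : IsAligned d c s) (hpos : 0 < sideLen d s)
    (i : Fin d → ℤ) (j : ℤ)
    (hint : (s ∩ qcell d i j).Nonempty) (hnsub : ¬ s ⊆ qcell d i j) :
    (2 : ℝ) ^ (-j) / c ≤ sideLen d s := by
  obtain ⟨i', j', hsub, hlen⟩ := hal
  have hc0 : (0:ℝ) < c := lt_of_lt_of_le one_pos hc
  by_cases h : j ≤ j'
  · exfalso
    obtain ⟨x, hxs, hxc⟩ := hint
    exact hnsub fun y hy =>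
      qcell_nested d i i' j j' h ⟨x, hsub hxs, hxc⟩ (hsub hy)
  · push_neg at h
    have h2 : (2:ℝ)^(-j) ≤ (2:ℝ)^(-j') :=
      zpow_le_zpow_right₀ (by norm_num) (by omega)
    rw [div_le_iff₀ hc0]
    calc (2:ℝ)^(-j) ≤ (2:ℝ)^(-j') := h2
    _ ≤ c * sideLen d s := hlen
    _ = sideLen d s * c := mul_comm _ _
end

section
/- Let d ≥ 1, let c ≥ 1 be an integer, and let S be a family of nonempty bounded subsets of ℝ^d that is c-fat in the following sense: for every axis-aligned hypercube γ of side length r > 0, there exists a set of at most c points of ℝ^d meeting every member of S that intersects γ and has side length at least r. (The side length of a nonempty bounded set s ⊆ ℝ^d is the maximum over m ∈ {1,…,d} of the difference between the supremum and infimum of the m-th coordinates of points of s.) Then for every axis-aligned hypercube γ of side length r > 0 and every integer K ≥ 1, there exists a set of at most 2d·c·(2K)^{d−1} points of ℝ^d meeting every member of S that intersects the topological boundary of γ and has side length at least r/(2K). -/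
/-- The axis-aligned hypercube with lower corner `a` and side length `r` in `ℝ^d`. -/
def cube (d : ℕ) (a : Fin d → ℝ) (r : ℝ) : Set (Fin d → ℝ) :=
  {x | ∀ m, a m ≤ x m ∧ x m ≤ a m + r}

lemma grid_lemma (ε : ℝ) (hε : 0 < ε) (K : ℕ) (hK : 1 ≤ K) (t : ℝ)
    (h0 : 0 ≤ t) (h1 : t ≤ 2 * K * ε) :
    ∃ i : Fin (2 * K), ε * i ≤ t ∧ t ≤ ε * i + ε := by
  have hfl : (0:ℤ) ≤ ⌊t / ε⌋ := Int.floor_nonneg.mpr (div_nonneg h0 hε.le)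
  set n := min (⌊t / ε⌋.toNat) (2 * K - 1) with hn
  refine ⟨⟨n, by omega⟩, ?_, ?_⟩
  · have h3 : (n : ℝ) ≤ t / ε := by
      calc (n : ℝ) ≤ (⌊t / ε⌋.toNat : ℝ) := by exact_mod_cast min_le_left _ _
      _ = (⌊t / ε⌋ : ℝ) := by exact_mod_cast congrArg (fun z : ℤ => (z : ℝ)) (Int.toNat_of_nonneg hfl)
      _ ≤ t / ε := Int.floor_le _
    calc ε * ((⟨n, by omega⟩ : Fin (2*K)) : ℝ) = ε * n := by norm_num
    _ ≤ ε * (t/ε) := by nlinarith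
    _ = t := by field_simp
  · rcases le_or_gt (⌊t / ε⌋.toNat) (2*K-1) with h | h
    · have hne : n = ⌊t / ε⌋.toNat := by omega
      have h5 := Int.lt_floor_add_one (t / ε)
      have h4 : t / ε < (n : ℝ) + 1 := by
        rw [hne]
        rw [← Int.toNat_of_nonneg hfl] at h5
        exact_mod_cast h5
      have h6 : t < ε * ((n:ℝ)+1) := by
        calc t = ε * (t/ε) := by field_simp
        _ < ε * ((n:ℝ)+1) := by nlinarith
      show t ≤ ε * ((n : ℕ) : ℝ) + ε
      push_cast
      nlinarith
    · have hne : n = 2*K - 1 := by omega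
      have h7 : (n : ℝ) + 1 = 2*K := by
        rw [hne]; push_cast [Nat.cast_sub (by omega : 1 ≤ 2*K)]; ring
      show t ≤ ε * ((n : ℕ) : ℝ) + ε
      nlinarith

lemma cube_eq_pi (d : ℕ) (a : Fin d → ℝ) (r : ℝ) :
    cube d a r = Set.pi Set.univ (fun m => Set.Icc (a m) (a m + r)) := by
  ext x
  simp only [cube, Set.mem_setOf_eq, Set.mem_pi, Set.mem_univ, Set.mem_Icc, true_implies]

lemma frontier_cube_sub (d : ℕ) (a : Fin d → ℝ) (r : ℝ) (x : Fin d → ℝ)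
    (hx : x ∈ frontier (cube d a r)) :
    x ∈ cube d a r ∧ ∃ m, x m = a m ∨ x m = a m + r := by
  have hcl : IsClosed (cube d a r) := by
    rw [cube_eq_pi]; exact isClosed_set_pi fun m _ => isClosed_Icc
  have hint : interior (cube d a r) =
      Set.pi Set.univ fun m => Set.Ioo (a m) (a m + r) := by
    rw [cube_eq_pi, interior_pi_set Set.finite_univ]
    simp [interior_Icc]
  rw [frontier, hcl.closure_eq, hint] at hx
  obtain ⟨hxc, hxn⟩ := hx
  refine ⟨hxc, ?_⟩
  simp only [Set.mem_pi, Set.mem_univ, Set.mem_Ioo, forall_true_left, not_forall] at hxn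
  obtain ⟨m, hm⟩ := hxn
  refine ⟨m, ?_⟩
  have h1 := (hxc m).1
  have h2 := (hxc m).2
  rcases not_and_or.mp hm with h | h
  · left; linarith [not_lt.mp h]
  · right; linarith [not_lt.mp h]

theorem stmt11 (d c : ℕ) (hd : 1 ≤ d) (hc : 1 ≤ c)
    (S : Set (Set (Fin d → ℝ)))
    (hS : ∀ s ∈ S, s.Nonempty ∧ Bornology.IsBounded s)
    (hfat : ∀ (a : Fin d → ℝ) (r : ℝ), 0 < r →
      ∃ P : Finset (Fin d → ℝ), P.card ≤ c ∧
        ∀ s ∈ S, (s ∩ cube d a r).Nonempty → r ≤ sideLen d s → ∃ p ∈ P, p ∈ s) :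
    ∀ (a : Fin d → ℝ) (r : ℝ), 0 < r → ∀ K : ℕ, 1 ≤ K →
      ∃ P : Finset (Fin d → ℝ), P.card ≤ 2 * d * c * (2 * K) ^ (d - 1) ∧
        ∀ s ∈ S, (s ∩ frontier (cube d a r)).Nonempty →
          r / (2 * (K : ℝ)) ≤ sideLen d s → ∃ p ∈ P, p ∈ s := by
  intro a r hr K hK
  set ε := r / (2 * (K : ℝ)) with hεdef
  have hKR : (0:ℝ) < 2 * K := by positivity
  have hε : 0 < ε := div_pos hr hKR
  have hrε : r = 2 * K * ε := by rw [hεdef]; field_simp [hKR.ne']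
  let I := Σ m : Fin d, Bool × ({j : Fin d // j ≠ m} → Fin (2 * K))
  let corner : I → (Fin d → ℝ) := fun i j =>
    if h : j = i.1 then (if i.2.1 then a i.1 + r - ε else a i.1)
    else a j + ε * ((i.2.2 ⟨j, h⟩ : ℕ) : ℝ)
  choose Pf hPcard hPf using fun i : I => hfat (corner i) ε hε
  refine ⟨Finset.univ.biUnion Pf, ?_, ?_⟩
  · have hcardI : Fintype.card I = d * (2 * (2 * K) ^ (d - 1)) := by
      have hsub : ∀ m : Fin d, Fintype.card {j : Fin d // j ≠ m} = d - 1 := by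
        intro m
        simp [Fintype.card_subtype_compl, Fintype.card_subtype_eq]
      simp only [I, Fintype.card_sigma, Fintype.card_prod, Fintype.card_bool,
        Fintype.card_fun, Fintype.card_fin, hsub]
      simp [Finset.sum_const, Finset.card_univ]
    calc (Finset.univ.biUnion Pf).card ≤ ∑ i : I, (Pf i).card := Finset.card_biUnion_le
      _ ≤ ∑ _i : I, c := Finset.sum_le_sum fun i _ => hPcard i
      _ = Fintype.card I * c := by simp [Finset.sum_const, Finset.card_univ, mul_comm]
      _ = 2 * d * c * (2 * K) ^ (d - 1) := by rw [hcardI]; ring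
  · rintro s hs ⟨x, hxs, hxf⟩ hside
    obtain ⟨hxc, m, hm⟩ := frontier_cube_sub d a r x hxf
    have hg : ∀ j : {j : Fin d // j ≠ m}, ∃ i : Fin (2 * K),
        ε * i ≤ x j - a j ∧ x j - a j ≤ ε * i + ε := by
      intro j
      refine grid_lemma ε hε K hK _ (by linarith [(hxc j).1]) ?_
      have := (hxc j).2
      linarith [hrε ▸ this]
    choose g hg1 hg2 using hg
    obtain ⟨b, hb1, hb2⟩ : ∃ b : Bool,
        (if b then a m + r - ε else a m) ≤ x m ∧
          x m ≤ (if b then a m + r - ε else a m) + ε := by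
      rcases hm with hm | hm
      · refine ⟨false, ?_, ?_⟩ <;> simp [hm] <;> linarith
      · refine ⟨true, ?_, ?_⟩ <;> simp [hm] <;> linarith
    set i : I := ⟨m, b, g⟩ with hi
    have hxcube : x ∈ cube d (corner i) ε := by
      intro j
      by_cases h : j = m
      · subst h
        simp only [corner, i, dif_pos rfl]
        exact ⟨hb1, hb2⟩
      · simp only [corner, i, dif_neg h]
        constructor
        · linarith [hg1 ⟨j, h⟩]
        · linarith [hg2 ⟨j, h⟩]
    obtain ⟨p, hp, hps⟩ := hPf i s hs ⟨x, hxs, hxcube⟩ hside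
    exact ⟨p, Finset.mem_biUnion.mpr ⟨i, Finset.mem_univ _, hp⟩, hps⟩
end

section
/- Let I be a finite nonempty family of pairwise disjoint nonempty compact axis-aligned rectangles in ℝ², where each rectangle s ∈ I has the form [x₁(s), x₂(s)] × [y₁(s), y₂(s)]. Define the SW extension of s to be the quadrant (−∞, x₂(s)] × (−∞, y₂(s)]. Then there exists a rectangle s ∈ I whose SW extension is disjoint from every other rectangle of I. -/
/-- The SW extension `(−∞, x₂(s)] × (−∞, y₂(s)]` of a rectangle
`s = [x₁,x₂] × [y₁,y₂] ⊆ ℝ²` (where `x₂(s)` and `y₂(s)` are recovered as the suprema of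
the coordinates of points of `s`). -/
noncomputable def swExt (s : Set (ℝ × ℝ)) : Set (ℝ × ℝ) :=
  Set.Iic (sSup (Prod.fst '' s)) ×ˢ Set.Iic (sSup (Prod.snd '' s))

/-- Combinatorial core: among finitely many "abstract rectangles" given by coordinates
`[x1 s, x2 s] × [y1 s, y2 s]`, pairwise disjoint (in the sense that some coordinate
intervals are disjoint), there is one whose SW quadrant `(−∞, x2 s] × (−∞, y2 s]`
meets no other rectangle (i.e. no other `t` has `x1 t ≤ x2 s` and `y1 t ≤ y2 s`). -/
theorem swExt_key {α : Type*} (I : Finset α) (hne : I.Nonempty) (x1 x2 y1 y2 : α → ℝ)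
    (hle : ∀ s ∈ I, x1 s ≤ x2 s ∧ y1 s ≤ y2 s)
    (hdisj : ∀ s ∈ I, ∀ t ∈ I, s ≠ t →
      x2 s < x1 t ∨ x2 t < x1 s ∨ y2 s < y1 t ∨ y2 t < y1 s) :
    ∃ s ∈ I, ∀ t ∈ I, t ≠ s → ¬(x1 t ≤ x2 s ∧ y1 t ≤ y2 s) := by
  classical
  set P : α → Prop := fun s => ∀ t ∈ I, t ≠ s → x1 t ≤ x2 s → y1 t ≤ y2 s → y2 t < y1 s
    with hP
  -- Step A: the rectangle with minimal `x2` satisfies `P` (all its blockers are below it).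
  have hA : (I.filter P).Nonempty := by
    obtain ⟨s0, hs0, hmin⟩ := I.exists_min_image x2 hne
    refine ⟨s0, Finset.mem_filter.2 ⟨hs0, ?_⟩⟩
    intro t ht hts hxt hyt
    rcases hdisj s0 hs0 t ht (Ne.symm hts) with h | h | h | h
    · exact absurd hxt (not_le.2 h)
    · exact absurd (hmin t ht) (not_le.2 (h.trans_le (hle s0 hs0).1))
    · exact absurd hyt (not_le.2 h)
    · exact h
  -- Step B: take `s` with minimal `y2` among rectangles satisfying `P`.
  obtain ⟨s, hsF, hsmin⟩ := (I.filter P).exists_min_image y2 hA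
  obtain ⟨hsI, hPs⟩ := Finset.mem_filter.1 hsF
  refine ⟨s, hsI, ?_⟩
  by_contra hbad
  push_neg at hbad
  obtain ⟨t0, ht0I, ht0ne, hxt0, hyt0⟩ := hbad
  -- the set of blockers of `s` is nonempty; take `s'` with minimal `x2` among them
  set B : Finset α := I.filter (fun t => t ≠ s ∧ x1 t ≤ x2 s ∧ y1 t ≤ y2 s) with hB
  have hBne : B.Nonempty := ⟨t0, Finset.mem_filter.2 ⟨ht0I, ht0ne, hxt0, hyt0⟩⟩
  obtain ⟨s', hs'B, hs'min⟩ := B.exists_min_image x2 hBne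
  have hs'B' := Finset.mem_filter.1 hs'B
  have hs'I := hs'B'.1
  have hs'ne := hs'B'.2.1
  have hs'x := hs'B'.2.2.1
  have hs'y := hs'B'.2.2.2
  have hy2s' : y2 s' < y1 s := hPs s' hs'I hs'ne hs'x hs'y
  -- `s'` also satisfies `P`
  have hPs' : P s' := by
    intro u huI hus' hxu hyu
    rcases hdisj s' hs'I u huI (Ne.symm hus') with h | h | h | h
    · exact absurd hxu (not_le.2 h)
    · -- `u` entirely to the left of `s'`: then `u` is a blocker of `s` with smaller `x2`
      exfalso
      have huS : u ≠ s := by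
        rintro rfl
        exact absurd hs'x (not_le.2 h)
      have huB : u ∈ B := by
        refine Finset.mem_filter.2 ⟨huI, huS, ?_, ?_⟩
        · exact le_trans (hle u huI).1 (le_trans h.le hs'x)
        · exact le_trans hyu (le_trans hy2s'.le (hle s hsI).2)
      have := hs'min u huB
      exact absurd (this.trans_lt h) (not_lt.2 (hle s' hs'I).1)
    · exact absurd hyu (not_le.2 h)
    · exact h
  -- contradiction with minimality of `y2 s`
  have hs'F : s' ∈ I.filter P := Finset.mem_filter.2 ⟨hs'I, hPs'⟩
  have := hsmin s' hs'F
  exact absurd (hy2s'.trans_le (hle s hsI).2) (not_lt.2 this)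

theorem stmt12 (I : Finset (Set (ℝ × ℝ))) (hne : I.Nonempty)
    (hrect : ∀ s ∈ I, ∃ x₁ x₂ y₁ y₂ : ℝ, x₁ ≤ x₂ ∧ y₁ ≤ y₂ ∧
      s = Set.Icc x₁ x₂ ×ˢ Set.Icc y₁ y₂)
    (hdisj : ∀ s ∈ I, ∀ t ∈ I, s ≠ t → s ∩ t = ∅) :
    ∃ s ∈ I, ∀ t ∈ I, t ≠ s → swExt s ∩ t = ∅ := by
  classical
  set X1 : Set (ℝ × ℝ) → ℝ := fun s => sInf (Prod.fst '' s) with hX1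
  set X2 : Set (ℝ × ℝ) → ℝ := fun s => sSup (Prod.fst '' s) with hX2
  set Y1 : Set (ℝ × ℝ) → ℝ := fun s => sInf (Prod.snd '' s) with hY1
  set Y2 : Set (ℝ × ℝ) → ℝ := fun s => sSup (Prod.snd '' s) with hY2
  have hdata : ∀ s ∈ I, ∃ a b c d : ℝ, a ≤ b ∧ c ≤ d ∧
      s = Set.Icc a b ×ˢ Set.Icc c d ∧
      X1 s = a ∧ X2 s = b ∧ Y1 s = c ∧ Y2 s = d := by
    intro s hs
    obtain ⟨a, b, c, d, hab, hcd, hseq⟩ := hrect s hs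
    have h1 : Prod.fst '' s = Set.Icc a b := by
      rw [hseq, Set.fst_image_prod _ (Set.nonempty_Icc.2 hcd)]
    have h2 : Prod.snd '' s = Set.Icc c d := by
      rw [hseq, Set.snd_image_prod (Set.nonempty_Icc.2 hab)]
    have e1 : X1 s = a := by rw [hX1]; simp only [h1]; exact csInf_Icc hab
    have e2 : X2 s = b := by rw [hX2]; simp only [h1]; exact csSup_Icc hab
    have e3 : Y1 s = c := by rw [hY1]; simp only [h2]; exact csInf_Icc hcd
    have e4 : Y2 s = d := by rw [hY2]; simp only [h2]; exact csSup_Icc hcd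
    exact ⟨a, b, c, d, hab, hcd, hseq, e1, e2, e3, e4⟩
  have hdisj' : ∀ s ∈ I, ∀ t ∈ I, s ≠ t →
      X2 s < X1 t ∨ X2 t < X1 s ∨ Y2 s < Y1 t ∨ Y2 t < Y1 s := by
    intro s hs t ht hst
    by_contra hcon
    push_neg at hcon
    obtain ⟨h1, h2, h3, h4⟩ := hcon
    obtain ⟨a, b, c, d, hab, hcd, hseqs, ea1, ea2, ea3, ea4⟩ := hdata s hs
    obtain ⟨a', b', c', d', hab', hcd', hseqt, eb1, eb2, eb3, eb4⟩ := hdata t ht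
    simp only [ea1, ea2, ea3, ea4, eb1, eb2, eb3, eb4] at h1 h2 h3 h4
    have hpt : (max a a', max c c') ∈ s ∩ t := by
      constructor
      · rw [hseqs]
        exact ⟨⟨le_max_left _ _, max_le hab h1⟩, ⟨le_max_left _ _, max_le hcd h3⟩⟩
      · rw [hseqt]
        exact ⟨⟨le_max_right _ _, max_le h2 hab'⟩, ⟨le_max_right _ _, max_le h4 hcd'⟩⟩
    rw [hdisj s hs t ht hst] at hpt
    exact hpt
  have hle : ∀ s ∈ I, X1 s ≤ X2 s ∧ Y1 s ≤ Y2 s := by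
    intro s hs
    obtain ⟨a, b, c, d, hab, hcd, _, e1, e2, e3, e4⟩ := hdata s hs
    rw [e1, e2, e3, e4]
    exact ⟨hab, hcd⟩
  obtain ⟨s, hsI, hgood⟩ := swExt_key I hne X1 X2 Y1 Y2 hle hdisj'
  refine ⟨s, hsI, ?_⟩
  intro t htI hts
  rw [Set.eq_empty_iff_forall_notMem]
  rintro ⟨px, py⟩ ⟨hpsw, hpt⟩
  obtain ⟨hpx, hpy⟩ := hpsw
  obtain ⟨a', b', c', d', _, _, hseqt, eb1, _, eb3, _⟩ := hdata t htI
  rw [hseqt] at hpt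
  obtain ⟨⟨hx1, _⟩, ⟨hy1, _⟩⟩ := hpt
  exact hgood t htI hts ⟨by rw [eb1]; exact le_trans hx1 hpx,
    by rw [eb3]; exact le_trans hy1 hpy⟩
end

section
/- Fix d ≥ 1 and a coordinate ξ ∈ {1,…,d}, and regard boxes in ℝ^d as products of d nonempty compact intervals. Let b₁ be a box and let F₂ and F₃ be finite families of boxes. Suppose there exist b₂ ∈ F₂ and b₃ ∈ F₃ such that b₁, b₂, b₃ are pairwise disjoint and the maximum of the ξ-th coordinate interval of b₂ is strictly less than the minimum of the ξ-th coordinate interval of b₃. Let G₂ = {b ∈ F₂ : b ∩ b₁ = ∅} and G₃ = {b ∈ F₃ : b ∩ b₁ = ∅}. Then for every b₂* ∈ G₂ whose ξ-th coordinate interval has minimum possible maximum (over G₂), and every b₃* ∈ G₃ whose ξ-th coordinate interval has maximum possible minimum (over G₃), the three boxes b₁, b₂*, b₃* are pairwise disjoint. -/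
/-- The box in `ℝ^d` determined by a pair `b = (lo, hi)` of corner functions:
the product of the compact intervals `[lo m, hi m]`. -/
def boxSet (d : ℕ) (b : (Fin d → ℝ) × (Fin d → ℝ)) : Set (Fin d → ℝ) :=
  {x | ∀ m, b.1 m ≤ x m ∧ x m ≤ b.2 m}

theorem stmt15 (d : ℕ) (hd : 1 ≤ d) (ξ : Fin d)
    (b₁ : (Fin d → ℝ) × (Fin d → ℝ)) (hb₁ : ∀ m, b₁.1 m ≤ b₁.2 m)
    (F₂ F₃ : Finset ((Fin d → ℝ) × (Fin d → ℝ)))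
    (hF₂ : ∀ b ∈ F₂, ∀ m, b.1 m ≤ b.2 m) (hF₃ : ∀ b ∈ F₃, ∀ m, b.1 m ≤ b.2 m)
    (hex : ∃ b₂ ∈ F₂, ∃ b₃ ∈ F₃,
      boxSet d b₁ ∩ boxSet d b₂ = ∅ ∧ boxSet d b₁ ∩ boxSet d b₃ = ∅ ∧
      boxSet d b₂ ∩ boxSet d b₃ = ∅ ∧ b₂.2 ξ < b₃.1 ξ) :
    ∀ b₂' ∈ F₂, boxSet d b₂' ∩ boxSet d b₁ = ∅ →
      (∀ b ∈ F₂, boxSet d b ∩ boxSet d b₁ = ∅ → b₂'.2 ξ ≤ b.2 ξ) →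
      ∀ b₃' ∈ F₃, boxSet d b₃' ∩ boxSet d b₁ = ∅ →
        (∀ b ∈ F₃, boxSet d b ∩ boxSet d b₁ = ∅ → b.1 ξ ≤ b₃'.1 ξ) →
        boxSet d b₁ ∩ boxSet d b₂' = ∅ ∧ boxSet d b₁ ∩ boxSet d b₃' = ∅ ∧
          boxSet d b₂' ∩ boxSet d b₃' = ∅ := by
  intro b₂' hb₂'F h₂₁ hmin b₃' hb₃'F h₃₁ hmax
  obtain ⟨b₂, hb₂, b₃, hb₃, _, _, _, hlt⟩ := hex
  refine ⟨by rw [Set.inter_comm]; exact h₂₁, by rw [Set.inter_comm]; exact h₃₁, ?_⟩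
  have key : b₂'.2 ξ < b₃'.1 ξ :=
    lt_of_le_of_lt (hmin b₂ hb₂ (by rw [Set.inter_comm]; assumption))
      (lt_of_lt_of_le hlt (hmax b₃ hb₃ (by rw [Set.inter_comm]; assumption)))
  ext x
  simp only [Set.mem_inter_iff, Set.mem_empty_iff_false, iff_false, not_and]
  intro hx hx'
  exact absurd (lt_of_le_of_lt (hx ξ).2 (lt_of_lt_of_le key (hx' ξ).1)) (lt_irrefl _)
end

section
/- For points p, q, r ∈ ℝ², define the orientation o(p,q,r) = (q₁ − p₁)(r₂ − p₂) − (q₂ − p₂)(r₁ − p₁). Let a, b, c, d ∈ ℝ² with a ≠ b and c ≠ d, suppose the four points a, b, c, d are not all collinear, and suppose the closed segments [a,b] and [c,d] (convex hulls of the endpoint pairs) are disjoint. Then at least one of the following holds: (o(c,d,a) > 0 and o(c,d,b) > 0), or (o(c,d,a) < 0 and o(c,d,b) < 0), or (o(a,b,c) > 0 and o(a,b,d) > 0), or (o(a,b,c) < 0 and o(a,b,d) < 0); that is, one of the two segments lies strictly in one open half-plane bounded by the line through the other segment. -/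
/-- The orientation `o(p,q,r) = (q₁ − p₁)(r₂ − p₂) − (q₂ − p₂)(r₁ − p₁)`. -/
def orient (p q r : ℝ × ℝ) : ℝ :=
  (q.1 - p.1) * (r.2 - p.2) - (q.2 - p.2) * (r.1 - p.1)

lemma orient_rev (p q x : ℝ × ℝ) : orient q p x = - orient p q x := by
  simp only [orient]; ring

lemma orient_affine (p q a b : ℝ × ℝ) (t : ℝ) :
    orient p q (a + t • (b - a)) = (1 - t) * orient p q a + t * orient p q b := by
  simp only [orient, Prod.fst_add, Prod.snd_add, Prod.smul_fst, Prod.smul_snd,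
    Prod.fst_sub, Prod.snd_sub, smul_eq_mul]
  ring

lemma mem_seg (a b : ℝ × ℝ) {t : ℝ} (h0 : 0 ≤ t) (h1 : t ≤ 1) :
    a + t • (b - a) ∈ segment ℝ a b := by
  rw [segment_eq_image']
  exact ⟨t, ⟨h0, h1⟩, rfl⟩

lemma line_param {a b c : ℝ × ℝ} (hab : a ≠ b) (h : orient a b c = 0) :
    ∃ u : ℝ, c = a + u • (b - a) := by
  have hne : b.1 - a.1 ≠ 0 ∨ b.2 - a.2 ≠ 0 := by
    by_contra h'
    push_neg at h'
    exact hab (Prod.ext (by have := h'.1; linarith) (by have := h'.2; linarith)).symm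
  simp only [orient] at h
  rcases hne with hv | hv
  · refine ⟨(c.1 - a.1) / (b.1 - a.1), Prod.ext ?_ ?_⟩
    · simp only [Prod.fst_add, Prod.smul_fst, Prod.fst_sub, smul_eq_mul]
      field_simp
      ring
    · simp only [Prod.snd_add, Prod.smul_snd, Prod.snd_sub, smul_eq_mul]
      field_simp
      linear_combination h
  · refine ⟨(c.2 - a.2) / (b.2 - a.2), Prod.ext ?_ ?_⟩
    · simp only [Prod.fst_add, Prod.smul_fst, Prod.fst_sub, smul_eq_mul]
      field_simp
      linear_combination -h
    · simp only [Prod.snd_add, Prod.smul_snd, Prod.snd_sub, smul_eq_mul]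
      field_simp
      ring

lemma collinear4 {a b c d : ℝ × ℝ} (hab : a ≠ b) (hc : orient a b c = 0)
    (hd : orient a b d = 0) : Collinear ℝ ({a, b, c, d} : Set (ℝ × ℝ)) := by
  obtain ⟨u, hu⟩ := line_param hab hc
  obtain ⟨v, hv⟩ := line_param hab hd
  have ha : a ∈ ({a, b, c, d} : Set (ℝ × ℝ)) := by simp
  rw [collinear_iff_of_mem ha]
  refine ⟨b - a, fun p hp => ?_⟩
  simp only [Set.mem_insert_iff, Set.mem_singleton_iff] at hp
  rcases hp with rfl | rfl | rfl | rfl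
  · exact ⟨0, by simp⟩
  · exact ⟨1, by simp⟩
  · exact ⟨u, by rw [hu]; simp only [vadd_eq_add]; abel⟩
  · exact ⟨v, by rw [hv]; simp only [vadd_eq_add]; abel⟩

lemma div_bounds {x y : ℝ} (h : x * y < 0) : 0 ≤ x / (x - y) ∧ x / (x - y) ≤ 1 := by
  rcases mul_neg_iff.mp h with ⟨hx, hy⟩ | ⟨hx, hy⟩
  · have hxy : 0 < x - y := by linarith
    exact ⟨div_nonneg hx.le hxy.le, (div_le_one hxy).mpr (by linarith)⟩
  · have hxy : x - y < 0 := by linarith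
    constructor
    · rw [div_nonneg_iff]; right; exact ⟨hx.le, hxy.le⟩
    · rw [div_le_one_iff]; right; right; exact ⟨hxy, by linarith⟩

lemma aux_s16 (a b c d : ℝ × ℝ) (hab : a ≠ b) (h0 : orient a b c = 0)
    (h1 : orient c d a * orient c d b ≤ 0) :
    c ∈ segment ℝ a b ∨ orient a b d = 0 := by
  obtain ⟨u, hu⟩ := line_param hab h0
  by_cases hu01 : 0 ≤ u ∧ u ≤ 1
  · left; rw [hu]; exact mem_seg a b hu01.1 hu01.2
  · right
    subst hu
    set k : ℝ := (d.1 - a.1) * (b.2 - a.2) - (d.2 - a.2) * (b.1 - a.1) with hk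
    have e1 : orient (a + u • (b - a)) d a = -u * k := by
      simp only [orient, Prod.fst_add, Prod.snd_add, Prod.smul_fst, Prod.smul_snd,
        Prod.fst_sub, Prod.snd_sub, smul_eq_mul, hk]
      ring
    have e2 : orient (a + u • (b - a)) d b = (1 - u) * k := by
      simp only [orient, Prod.fst_add, Prod.snd_add, Prod.smul_fst, Prod.smul_snd,
        Prod.fst_sub, Prod.snd_sub, smul_eq_mul, hk]
      ring
    rw [e1, e2] at h1
    have huu : 0 < u * (u - 1) := by
      rcases not_and_or.mp hu01 with h | h
      · push_neg at h; nlinarith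
      · push_neg at h; nlinarith
    have hk2 : k ^ 2 ≤ 0 := by nlinarith
    have hk0 : k = 0 := by nlinarith [sq_nonneg k]
    simp only [orient]
    linear_combination -hk0

lemma core (a b c d : ℝ × ℝ) (hab : a ≠ b) (hcd : c ≠ d)
    (h1 : orient c d a * orient c d b ≤ 0)
    (h2 : orient a b c * orient a b d ≤ 0) :
    (∃ p, p ∈ segment ℝ a b ∧ p ∈ segment ℝ c d) ∨
      Collinear ℝ ({a, b, c, d} : Set (ℝ × ℝ)) := by
  by_cases hc0 : orient a b c = 0
  · by_cases hd0 : orient a b d = 0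
    · exact Or.inr (collinear4 hab hc0 hd0)
    · rcases aux_s16 a b c d hab hc0 h1 with hm | h0'
      · exact Or.inl ⟨c, hm, left_mem_segment ℝ c d⟩
      · exact absurd h0' hd0
  by_cases hd0 : orient a b d = 0
  · have h1' : orient d c a * orient d c b ≤ 0 := by
      have e : orient d c a * orient d c b = orient c d a * orient c d b := by
        simp only [orient]; ring
      rw [e]; exact h1
    rcases aux_s16 a b d c hab hd0 h1' with hm | h0'
    · exact Or.inl ⟨d, hm, right_mem_segment ℝ c d⟩
    · exact absurd h0' hc0
  by_cases ha0 : orient c d a = 0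
  · rcases aux_s16 c d a b hcd ha0 h2 with hm | hb0
    · exact Or.inl ⟨a, left_mem_segment ℝ a b, hm⟩
    · refine Or.inr ((collinear4 hcd ha0 hb0).subset ?_)
      intro x hx
      simp only [Set.mem_insert_iff, Set.mem_singleton_iff] at hx ⊢
      tauto
  by_cases hb0 : orient c d b = 0
  · have h2' : orient b a c * orient b a d ≤ 0 := by
      have e : orient b a c * orient b a d = orient a b c * orient a b d := by
        simp only [orient]; ring
      rw [e]; exact h2
    rcases aux_s16 c d b a hcd hb0 h2' with hm | h0'
    · exact Or.inl ⟨b, right_mem_segment ℝ a b, hm⟩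
    · exact absurd h0' ha0
  -- all four orientations nonzero: proper crossing
  left
  have h1s : orient c d a * orient c d b < 0 :=
    lt_of_le_of_ne h1 (mul_ne_zero ha0 hb0)
  have h2s : orient a b c * orient a b d < 0 :=
    lt_of_le_of_ne h2 (mul_ne_zero hc0 hd0)
  have hne12 : orient c d a - orient c d b ≠ 0 := by
    intro h
    have h' : orient c d a = orient c d b := by linarith
    rw [h'] at h1s
    nlinarith
  set t := orient c d a / (orient c d a - orient c d b) with ht
  obtain ⟨ht0, ht1⟩ := div_bounds h1s
  rw [← ht] at ht0 ht1
  set p := a + t • (b - a) with hp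
  have hpab : p ∈ segment ℝ a b := mem_seg a b ht0 ht1
  have hpline : orient c d p = 0 := by
    rw [hp, orient_affine, ht]
    field_simp
    ring
  obtain ⟨s, hs⟩ := line_param hcd hpline
  have hpab0 : orient a b p = 0 := by
    rw [hp, orient_affine]
    have e1 : orient a b a = 0 := by simp [orient]
    have e2 : orient a b b = 0 := by simp only [orient]; ring
    rw [e1, e2]; ring
  rw [hs, orient_affine] at hpab0
  have huv : orient a b c - orient a b d ≠ 0 := by
    intro h
    have h' : orient a b c = orient a b d := by linarith
    rw [h'] at h2s
    nlinarith
  have hs_eq : s = orient a b c / (orient a b c - orient a b d) := by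
    field_simp
    linear_combination -hpab0
  obtain ⟨hs0, hs1⟩ := div_bounds h2s
  rw [← hs_eq] at hs0 hs1
  exact ⟨p, hpab, hs ▸ mem_seg c d hs0 hs1⟩

lemma prod_nonpos {x y : ℝ} (h1 : ¬(0 < x ∧ 0 < y)) (h2 : ¬(x < 0 ∧ y < 0)) :
    x * y ≤ 0 := by
  rcases lt_trichotomy x 0 with hx | hx | hx
  · have hy : 0 ≤ y := by
      by_contra hy; push_neg at hy; exact h2 ⟨hx, hy⟩
    exact mul_nonpos_iff.mpr (Or.inr ⟨hx.le, hy⟩)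
  · simp [hx]
  · have hy : y ≤ 0 := by
      by_contra hy; push_neg at hy; exact h1 ⟨hx, hy⟩
    exact mul_nonpos_iff.mpr (Or.inl ⟨hx.le, hy⟩)

theorem stmt16 (a b c d : ℝ × ℝ) (hab : a ≠ b) (hcd : c ≠ d)
    (hcol : ¬ Collinear ℝ ({a, b, c, d} : Set (ℝ × ℝ)))
    (hdisj : segment ℝ a b ∩ segment ℝ c d = ∅) :
    (0 < orient c d a ∧ 0 < orient c d b) ∨
    (orient c d a < 0 ∧ orient c d b < 0) ∨
    (0 < orient a b c ∧ 0 < orient a b d) ∨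
    (orient a b c < 0 ∧ orient a b d < 0) := by
  by_contra h
  have h1 : orient c d a * orient c d b ≤ 0 :=
    prod_nonpos (fun hc => h (Or.inl hc)) (fun hc => h (Or.inr (Or.inl hc)))
  have h2 : orient a b c * orient a b d ≤ 0 :=
    prod_nonpos (fun hc => h (Or.inr (Or.inr (Or.inl hc))))
      (fun hc => h (Or.inr (Or.inr (Or.inr hc))))
  rcases core a b c d hab hcd h1 h2 with ⟨p, hp1, hp2⟩ | hc
  · have : p ∈ segment ℝ a b ∩ segment ℝ c d := ⟨hp1, hp2⟩
    rw [hdisj] at this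
    exact this
  · exact hcol hc
end
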